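/- arXiv:2011.14532 — 9 statements merged into one kernel-verified Lean document; each statement's English description precedes it below -/
import Mathlib

section
/- Let S be a uniformly random string in {A,C,G,T}^n conditioned on having no two consecutive equal characters (first character uniform, each subsequent character uniform on the three characters different from its predecessor), and let R = (ACGT)*. Then cost_R(S) is distributed as X_1 + X_2 + ... + X_n where the X_i are independent, X_1 is uniform on {1,2,3,4}, and X_i is uniform on {1,2,3} for i ≥ 2; in particular E[cost_R(S)] = 2n + 1/2. -/
/-!
Embedding a strand greedily (each letter at its first occurrence after the previous one) is
optimal, so with letters read as `0, 1, 2, 3` the cost of `S₀ S₁ … S_{n-1}` against `(ACGT)*`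
is `(S₀ + 1) + Σ ((S_{i+1} - S_i - 1) mod 4 + 1)`.
Without homopolymers every step `(S_{i+1} - S_i) mod 4` lies in `{1, 2, 3}`, and a strand is
determined by its first letter and its steps, which may be chosen freely: this bijection carries
the cost to `X₁ + ⋯ + Xₙ`. For the mean, reversing every letter and every step
(`x ↦ 3 - x` on `Fin 4`, `d ↦ 2 - d` on `Fin 3`) is an involution under which
`cost + cost' = 4n + 1`.
-/

open Finset
open scoped Classical

noncomputable def refCost (R : ℕ → Fin 4) (S : List (Fin 4)) : ℕ :=
  sInf {m | S.Sublist ((List.range m).map R)}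

def refACGT : ℕ → Fin 4 := fun i => ⟨i % 4, by omega⟩

open List Fin.NatCast

section Greedy

variable {α : Type*} [DecidableEq α] (R : ℕ → α) (hR : ∀ p a, ∃ j, R (p + j) = a)

noncomputable def nextGap (p : ℕ) (a : α) : ℕ := Nat.find (hR p a)

noncomputable def greedyEnd : ℕ → List α → ℕ
  | p, [] => p
  | p, a :: t => greedyEnd (p + nextGap R hR p a + 1) t

variable {R}

theorem nextGap_eq_zero_iff {p : ℕ} {a : α} : nextGap R hR p a = 0 ↔ R p = a := by
  simp [nextGap]

theorem nextGap_of_ne {p : ℕ} {a : α} (h : R p ≠ a) :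
    nextGap R hR p a = nextGap R hR (p + 1) a + 1 := by
  have hsucc : ∃ j, R (p + (j + 1)) = a :=
    ⟨_, by rw [← add_assoc, add_right_comm]; exact Nat.find_spec (hR (p + 1) a)⟩
  rw [nextGap, Nat.find_comp_succ _ hsucc (by simpa using h)]
  congr 1
  exact Nat.find_congr' fun {n} => by rw [add_right_comm, add_assoc]

theorem le_greedyEnd (p : ℕ) (S : List α) : p ≤ greedyEnd R hR p S := by
  induction S generalizing p with
  | nil => exact le_rfl
  | cons a t ih => exact (ih _).trans' (by omega)

theorem sublist_map_range'_iff_greedyEnd_le (k p : ℕ) (S : List α) :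
    S <+ (List.range' p k).map R ↔ greedyEnd R hR p S ≤ p + k := by
  induction k generalizing p S with
  | zero =>
    cases S with
    | nil => simp [greedyEnd]
    | cons a t => simpa [greedyEnd] using (le_greedyEnd hR _ t).trans_lt' (by omega)
  | succ k ih =>
    cases S with
    | nil => simp [greedyEnd]
    | cons a t =>
      rw [List.range'_succ, List.map_cons]
      by_cases h : R p = a
      · rw [h, List.cons_sublist_cons, ih, greedyEnd, (nextGap_eq_zero_iff hR).2 h, add_zero]
        omega
      · rw [sublist_cons_iff, ih, greedyEnd, greedyEnd, nextGap_of_ne hR h]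
        simp only [cons.injEq, Ne.symm h, false_and, exists_false, or_false]
        rw [← add_assoc, add_right_comm p]
        omega

end Greedy

theorem refCost_eq_greedyEnd {R : ℕ → Fin 4} (hR : ∀ p a, ∃ j, R (p + j) = a)
    (S : List (Fin 4)) : refCost R S = greedyEnd R hR 0 S := by
  have hset : {m | S.Sublist ((List.range m).map R)} = Set.Ici (greedyEnd R hR 0 S) := by
    ext m
    rw [Set.mem_ofPred_eq, List.range_eq_range', sublist_map_range'_iff_greedyEnd_le hR,
      zero_add, Set.mem_Ici]
  rw [refCost, hset, csInf_Ici]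

theorem refACGT_eq_natCast (p : ℕ) : refACGT p = (p : Fin 4) :=
  Fin.ext (Fin.val_natCast p 4).symm

theorem refACGT_add_val_sub (p : ℕ) (a : Fin 4) : refACGT (p + (a - refACGT p : Fin 4)) = a := by
  simp [refACGT_eq_natCast]

theorem exists_refACGT_add_eq (p : ℕ) (a : Fin 4) : ∃ j, refACGT (p + j) = a :=
  ⟨_, refACGT_add_val_sub p a⟩

theorem nextGap_refACGT (p : ℕ) (a : Fin 4) :
    nextGap refACGT exists_refACGT_add_eq p a = (a - refACGT p : Fin 4) := by
  refine (Nat.find_eq_iff _).2 ⟨refACGT_add_val_sub p a, fun j hj hpj => hj.ne' ?_⟩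
  have hj4 : j < 4 := hj.trans (a - refACGT p).isLt
  rw [← hpj, refACGT_eq_natCast, refACGT_eq_natCast]
  simp [Fin.val_natCast, Nat.mod_eq_of_lt hj4]

theorem greedyEnd_refACGT_ofFn {k : ℕ} (S : Fin (k + 1) → Fin 4) (p : ℕ) :
    greedyEnd refACGT exists_refACGT_add_eq p (ofFn S) =
      p + (S 0 - refACGT p : Fin 4) + 1 +
        ∑ i : Fin k, ((S i.succ - S i.castSucc - 1 : Fin 4) + 1 : ℕ) := by
  induction k generalizing p with
  | zero => simp [greedyEnd, nextGap_refACGT]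
  | succ k ih =>
    have hcursor : refACGT (p + (S 0 - refACGT p : Fin 4) + 1) = S 0 + 1 := by
      rw [refACGT_eq_natCast, Nat.cast_add, ← refACGT_eq_natCast, refACGT_add_val_sub,
        Nat.cast_one]
    rw [ofFn_succ, greedyEnd, nextGap_refACGT, ih, hcursor, Fin.sum_univ_succ, sub_sub]
    simp only [Fin.succ_zero_eq_one, Fin.castSucc_zero, Fin.succ_castSucc]
    ring

theorem refCost_refACGT_ofFn {k : ℕ} (S : Fin (k + 1) → Fin 4) :
    refCost refACGT (ofFn S) =
      (S 0 : ℕ) + 1 + ∑ i : Fin k, ((S i.succ - S i.castSucc - 1 : Fin 4) + 1 : ℕ) := by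
  rw [refCost_eq_greedyEnd exists_refACGT_add_eq, greedyEnd_refACGT_ofFn, refACGT_eq_natCast,
    Nat.cast_zero, sub_zero, zero_add]

theorem isChain_ofFn_succ_iff {α : Type*} {r : α → α → Prop} {k : ℕ}
    (S : Fin (k + 1) → α) :
    IsChain r (ofFn S) ↔ ∀ i : Fin k, r (S i.castSucc) (S i.succ) := by
  rw [isChain_ofFn, Fin.forall_iff]
  exact forall_congr' fun i => ⟨fun h hi => h (by omega), fun h hi => h (by omega)⟩

section Strands

variable {q k : ℕ}

def strandOf (p : Fin (q + 1) × (Fin k → Fin q)) : Fin (k + 1) → Fin (q + 1) :=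
  p.1 +ᵥ Fin.partialSum fun i => (p.2 i).succ

theorem strandOf_zero (p : Fin (q + 1) × (Fin k → Fin q)) : strandOf p 0 = p.1 := by
  simp [strandOf]

theorem strandOf_succ_sub_castSucc (p : Fin (q + 1) × (Fin k → Fin q)) (i : Fin k) :
    strandOf p i.succ - strandOf p i.castSucc = (p.2 i).succ := by
  simp [strandOf, Fin.partialSum_succ]

theorem strandOf_injective : Function.Injective (strandOf (q := q) (k := k)) := by
  intro p p' h
  refine Prod.ext ?_ (funext fun i => Fin.succ_injective _ ?_)
  · rw [← strandOf_zero p, h, strandOf_zero]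
  · rw [← strandOf_succ_sub_castSucc p, h, strandOf_succ_sub_castSucc]

theorem isChain_ne_ofFn_iff_mem_range_strandOf (S : Fin (k + 1) → Fin (q + 1)) :
    IsChain (· ≠ ·) (ofFn S) ↔ S ∈ Set.range strandOf := by
  rw [isChain_ofFn_succ_iff]
  constructor
  · intro hS
    have hstep (i : Fin k) : S i.succ - S i.castSucc ≠ 0 := sub_ne_zero.2 (hS i).symm
    refine ⟨(S 0, fun i => (S i.succ - S i.castSucc).pred (hstep i)), ?_⟩
    conv_rhs => rw [← Fin.partialSum_left_neg S]
    simp [strandOf, neg_add_eq_sub]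
  · rintro ⟨p, rfl⟩ i h
    exact Fin.succ_ne_zero (p.2 i) (by rw [← strandOf_succ_sub_castSucc, h, sub_self])

-- `P` is kept abstract so that this rewrites filters by a predicate that is only
-- definitionally `IsChain (· ≠ ·) (ofFn S)`, such as `Chain'`, with any decidability instance.
theorem filter_eq_map_strandOf {P : (Fin (k + 1) → Fin (q + 1)) → Prop}
    [DecidablePred P] (hP : ∀ S, P S ↔ IsChain (· ≠ ·) (ofFn S)) :
    univ.filter P = univ.map ⟨strandOf, strandOf_injective⟩ := by
  ext S
  rw [Finset.mem_filter, hP, isChain_ne_ofFn_iff_mem_range_strandOf]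
  simp

end Strands

def stepSum {k : ℕ} (p : Fin 4 × (Fin k → Fin 3)) : ℕ :=
  ((p.1 : ℕ) + 1) + ∑ i, ((p.2 i : ℕ) + 1)

theorem refCost_strandOf {k : ℕ} (p : Fin 4 × (Fin k → Fin 3)) :
    refCost refACGT (ofFn (strandOf p)) = stepSum p := by
  rw [refCost_refACGT_ofFn, strandOf_zero, stepSum]
  congr 1
  refine sum_congr rfl fun i _ => ?_
  rw [strandOf_succ_sub_castSucc, ← Fin.coeSucc_eq_succ, add_sub_cancel_right,
    Fin.val_castSucc]

theorem two_mul_sum_eq_card_mul_of_add_comp {α : Type*} [Fintype α] (e : α ≃ α)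
    (f : α → ℕ) (c : ℕ) (h : ∀ x, f x + f (e x) = c) :
    2 * ∑ x, f x = Fintype.card α * c := by
  calc 2 * ∑ x, f x = ∑ x, f x + ∑ x, f (e x) := by rw [two_mul, Equiv.sum_comp]
    _ = ∑ x, (f x + f (e x)) := sum_add_distrib.symm
    _ = Fintype.card α * c := by simp [h]

theorem two_mul_sum_stepSum (k : ℕ) :
    2 * ∑ p : Fin 4 × (Fin k → Fin 3), stepSum p = (4 * (k + 1) + 1) * (4 * 3 ^ k) := by
  have hrev (p : Fin 4 × (Fin k → Fin 3)) :
      stepSum p + stepSum (p.1.rev, fun i => (p.2 i).rev) = 4 * k + 5 := by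
    have hstep (i : Fin k) : ((p.2 i : ℕ) + 1) + (((p.2 i).rev : ℕ) + 1) = 4 := by
      rw [Fin.val_rev]; omega
    have hfirst : ((p.1 : ℕ) + 1) + ((p.1.rev : ℕ) + 1) = 5 := by rw [Fin.val_rev]; omega
    calc stepSum p + stepSum (p.1.rev, fun i => (p.2 i).rev)
        = (((p.1 : ℕ) + 1) + ((p.1.rev : ℕ) + 1)) +
            ∑ i, (((p.2 i : ℕ) + 1) + (((p.2 i).rev : ℕ) + 1)) := by
          simp only [stepSum, sum_add_distrib]; ring
      _ = 4 * k + 5 := by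
          rw [sum_congr rfl fun i _ => hstep i, hfirst]
          simp only [sum_const, card_univ, Fintype.card_fin, smul_eq_mul]
          ring
  rw [two_mul_sum_eq_card_mul_of_add_comp
    (Equiv.prodCongr Fin.revPerm (Equiv.piCongrRight fun _ => Fin.revPerm)) _ _ hrev]
  simp only [Fintype.card_prod, Fintype.card_fun, Fintype.card_fin]
  ring

/-- For S uniformly random among strands of length n without homopolymers, the
cost with reference (ACGT)* is distributed as X₁ + ⋯ + Xₙ with X₁ uniform on
{1,2,3,4} and Xᵢ uniform on {1,2,3} for i ≥ 2 (stated as equality of counts),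
and its expectation is 2n + 1/2 (stated as 2 · Σ cost = (4n+1) · 4 · 3^(n-1)). -/
theorem stmt4 (n : ℕ) (hn : 1 ≤ n) :
    (∀ m : ℕ,
      (Finset.univ.filter (fun S : Fin n → Fin 4 =>
        List.Chain' (· ≠ ·) (List.ofFn S) ∧ refCost refACGT (List.ofFn S) = m)).card
      = (Finset.univ.filter (fun p : Fin 4 × (Fin (n - 1) → Fin 3) =>
          ((p.1 : ℕ) + 1) + ∑ i, ((p.2 i : ℕ) + 1) = m)).card) ∧
    2 * (∑ S ∈ Finset.univ.filter
          (fun S : Fin n → Fin 4 => List.Chain' (· ≠ ·) (List.ofFn S)),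
        refCost refACGT (List.ofFn S)) = (4 * n + 1) * (4 * 3 ^ (n - 1)) := by
  obtain ⟨k, rfl⟩ : ∃ k, n = k + 1 := ⟨n - 1, by omega⟩
  simp only [Nat.add_sub_cancel]
  constructor
  · intro m
    rw [← Finset.filter_filter, filter_eq_map_strandOf fun _ => by rfl, Finset.filter_map,
      card_map]
    simp only [Function.Embedding.coeFn_mk, Function.comp_def, refCost_strandOf]
    rfl
  · rw [filter_eq_map_strandOf fun _ => by rfl, sum_map]
    simp only [Function.Embedding.coeFn_mk, refCost_strandOf]
    exact two_mul_sum_stepSum k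
end

section
/- Let M ≥ n and let S be a set of M i.i.d. uniformly random strings in {A,C,G,T}^n. Then with probability at least 1 − 1/n, the length of a shortest common supersequence of all strings in S is at most 2.5n + 3√(n log M). -/
open Finset
open scoped Classical

def stp (p : ℕ) (c : Fin 4) : ℕ := (c.val + 4 - p % 4) % 4 + 1

def steps : ℕ → List (Fin 4) → List ℕ
  | _, [] => []
  | p, c :: s => stp p c :: steps (p + stp p c) s

def pat (L : ℕ) : List (Fin 4) :=
  List.ofFn (fun j : Fin L => (⟨j.val % 4, Nat.mod_lt _ (by norm_num)⟩ : Fin 4))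

lemma stp_pos (p : ℕ) (c : Fin 4) : 1 ≤ stp p c := by unfold stp; omega

lemma pat_length (L : ℕ) : (pat L).length = L := by simp [pat]

lemma embed : ∀ (s : List (Fin 4)) (p L : ℕ), p + (steps p s).sum ≤ L →
    s.Sublist ((pat L).drop p) := by
  intro s
  induction s with
  | nil => intro p L _; simp
  | cons c s ih =>
    intro p L h
    rw [steps] at h
    simp only [List.sum_cons] at h
    set d := stp p c with hd
    have hd1 : 1 ≤ d := stp_pos p c
    have he : p + (d - 1) < L := by omega
    have hlt : p + (d - 1) < (pat L).length := by rw [pat_length]; exact he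
    have hchar : (pat L)[p + (d - 1)]'hlt = c := by
      simp only [pat, List.getElem_ofFn]
      apply Fin.ext
      simp only [hd, stp]
      have := c.isLt
      omega
    have h1 : (pat L).drop (p + (d - 1)) = c :: (pat L).drop (p + (d - 1) + 1) := by
      rw [List.drop_eq_getElem_cons hlt, hchar]
    have h2 : s.Sublist ((pat L).drop (p + d)) := ih (p + d) L (by omega)
    have h3 : (c :: s).Sublist ((pat L).drop (p + (d - 1))) := by
      rw [h1]
      have : p + (d - 1) + 1 = p + d := by omega
      rw [this]
      exact h2.cons₂ c
    refine h3.trans ?_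
    rw [← List.drop_drop]
    exact List.drop_sublist _ _

lemma stp_sum (lam : ℝ) (p : ℕ) :
    (∑ c : Fin 4, Real.exp (lam * (stp p c))) = ∑ c : Fin 4, Real.exp (lam * (c.val + 1)) := by
  have h : p % 4 = 0 ∨ p % 4 = 1 ∨ p % 4 = 2 ∨ p % 4 = 3 := by omega
  rcases h with h | h | h | h <;>
  · rw [Fin.sum_univ_four, Fin.sum_univ_four]
    simp only [stp, h, show ((3:Fin 4):ℕ) = 3 from rfl, show ((2:Fin 4):ℕ) = 2 from rfl,
      show ((1:Fin 4):ℕ) = 1 from rfl, show ((0:Fin 4):ℕ) = 0 from rfl]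
    try norm_num
    try ring

lemma sumExp (lam : ℝ) : ∀ (n p : ℕ),
    (∑ s : Fin n → Fin 4, Real.exp (lam * ((steps p (List.ofFn s)).sum : ℕ))) =
      (∑ c : Fin 4, Real.exp (lam * (c.val + 1))) ^ n := by
  intro n
  induction n with
  | zero => intro p; simp [steps]
  | succ n ih =>
    intro p
    rw [← (Fin.consEquiv (fun _ : Fin (n+1) => Fin 4)).sum_comp]
    rw [Fintype.sum_prod_type]
    have hterm : ∀ (c : Fin 4) (s : Fin n → Fin 4),
        Real.exp (lam * ((steps p (List.ofFn (Fin.consEquiv (fun _ : Fin (n+1) => Fin 4) (c, s)))).sum : ℕ)) =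
          Real.exp (lam * (stp p c)) * Real.exp (lam * ((steps (p + stp p c) (List.ofFn s)).sum : ℕ)) := by
      intro c s
      have : List.ofFn (Fin.consEquiv (fun _ : Fin (n+1) => Fin 4) (c, s)) = c :: List.ofFn s := by
        rw [List.ofFn_succ]
        simp [Fin.consEquiv]
      rw [this, steps]
      simp only [List.sum_cons]
      push_cast
      rw [mul_add, Real.exp_add]
    calc (∑ c : Fin 4, ∑ s : Fin n → Fin 4,
            Real.exp (lam * ((steps p (List.ofFn (Fin.consEquiv (fun _ : Fin (n+1) => Fin 4) (c, s)))).sum : ℕ)))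
        = ∑ c : Fin 4, Real.exp (lam * (stp p c)) *
            (∑ s : Fin n → Fin 4, Real.exp (lam * ((steps (p + stp p c) (List.ofFn s)).sum : ℕ))) := by
          refine Finset.sum_congr rfl fun c _ => ?_
          rw [Finset.mul_sum]
          exact Finset.sum_congr rfl fun s _ => hterm c s
      _ = ∑ c : Fin 4, Real.exp (lam * (stp p c)) * (∑ c : Fin 4, Real.exp (lam * (c.val + 1))) ^ n := by
          refine Finset.sum_congr rfl fun c _ => ?_
          rw [ih]
      _ = (∑ c : Fin 4, Real.exp (lam * (c.val + 1))) ^ (n+1) := by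
          rw [← Finset.sum_mul, stp_sum, pow_succ, mul_comm]


lemma mgf_bound (lam : ℝ) :
    (∑ c : Fin 4, Real.exp (lam * (c.val + 1))) ≤ 4 * Real.exp (2.5 * lam + 9 * lam ^ 2 / 8) := by
  rw [Fin.sum_univ_four]
  simp only [show ((3:Fin 4):ℕ) = 3 from rfl, show ((2:Fin 4):ℕ) = 2 from rfl,
    show ((1:Fin 4):ℕ) = 1 from rfl, show ((0:Fin 4):ℕ) = 0 from rfl]
  push_cast
  have h1 : Real.exp (lam * 1) + Real.exp (lam * 4) ≤ 2 * Real.exp (2.5 * lam + 9 * lam ^ 2 / 8) := by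
    have hc := Real.cosh_le_exp_half_sq (1.5 * lam)
    rw [Real.cosh_eq] at hc
    have he : (1.5 * lam) ^ 2 / 2 = 9 * lam ^ 2 / 8 := by ring
    rw [he] at hc
    have hpos : (0:ℝ) < Real.exp (2.5 * lam) := Real.exp_pos _
    have := mul_le_mul_of_nonneg_left hc (le_of_lt hpos)
    calc Real.exp (lam * 1) + Real.exp (lam * 4)
        = Real.exp (2.5 * lam) * ((Real.exp (1.5 * lam) + Real.exp (-(1.5 * lam))) / 2) * 2 := by
          have e1 : Real.exp (lam * 4) = Real.exp (2.5 * lam) * Real.exp (1.5 * lam) := by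
            rw [← Real.exp_add]; ring_nf
          have e2 : Real.exp (lam * 1) = Real.exp (2.5 * lam) * Real.exp (-(1.5 * lam)) := by
            rw [← Real.exp_add]; ring_nf
          rw [e1, e2]; ring
      _ ≤ Real.exp (2.5 * lam) * Real.exp (9 * lam ^ 2 / 8) * 2 := by nlinarith
      _ = 2 * Real.exp (2.5 * lam + 9 * lam ^ 2 / 8) := by rw [← Real.exp_add]; ring
  have h2 : Real.exp (lam * 2) + Real.exp (lam * 3) ≤ 2 * Real.exp (2.5 * lam + 9 * lam ^ 2 / 8) := by
    have hc := Real.cosh_le_exp_half_sq (0.5 * lam)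
    rw [Real.cosh_eq] at hc
    have hmono : Real.exp ((0.5 * lam) ^ 2 / 2) ≤ Real.exp (9 * lam ^ 2 / 8) := by
      apply Real.exp_le_exp.2; nlinarith [sq_nonneg lam]
    have hc2 := hc.trans hmono
    have hpos : (0:ℝ) < Real.exp (2.5 * lam) := Real.exp_pos _
    calc Real.exp (lam * 2) + Real.exp (lam * 3)
        = Real.exp (2.5 * lam) * ((Real.exp (0.5 * lam) + Real.exp (-(0.5 * lam))) / 2) * 2 := by
          have e1 : Real.exp (lam * 3) = Real.exp (2.5 * lam) * Real.exp (0.5 * lam) := by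
            rw [← Real.exp_add]; ring_nf
          have e2 : Real.exp (lam * 2) = Real.exp (2.5 * lam) * Real.exp (-(0.5 * lam)) := by
            rw [← Real.exp_add]; ring_nf
          rw [e1, e2]; ring
      _ ≤ Real.exp (2.5 * lam) * Real.exp (9 * lam ^ 2 / 8) * 2 := by nlinarith
      _ = 2 * Real.exp (2.5 * lam + 9 * lam ^ 2 / 8) := by rw [← Real.exp_add]; ring
  linarith

noncomputable def costR (n : ℕ) (s : Fin n → Fin 4) : ℝ := ((steps 0 (List.ofFn s)).sum : ℕ)

lemma bad_count (n M : ℕ) (hn : 2 ≤ n) (hM : n ≤ M) :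
    ((univ.filter (fun s : Fin n → Fin 4 =>
        (2.5 * n + 3 * Real.sqrt (n * Real.log M) : ℝ) < costR n s)).card : ℝ) ≤
      4 ^ n / M ^ 2 := by
  have hn0 : (0:ℝ) < n := by exact_mod_cast Nat.lt_of_lt_of_le (by norm_num) hn
  have hM2 : 2 ≤ M := le_trans hn hM
  have hM0 : (0:ℝ) < M := by exact_mod_cast Nat.lt_of_lt_of_le (by norm_num) hM2
  have hlogM : 0 ≤ Real.log M := Real.log_nonneg (by exact_mod_cast Nat.one_le_of_lt hM2)
  set t : ℝ := 3 * Real.sqrt (n * Real.log M) with ht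
  have ht0 : 0 ≤ t := by positivity
  have ht2 : t ^ 2 = 9 * (n * Real.log M) := by
    rw [ht, mul_pow, Real.sq_sqrt (by positivity)]; norm_num
  set lam : ℝ := 4 * t / (9 * n) with hlam
  have hlam0 : 0 ≤ lam := by positivity
  set b : ℝ := 2.5 * n + t with hb
  set Bad : Finset (Fin n → Fin 4) := univ.filter (fun s => b < costR n s) with hBad
  have step1 : (Bad.card : ℝ) ≤ ∑ s ∈ Bad, Real.exp (lam * (costR n s - b)) := by
    rw [Finset.card_eq_sum_ones]
    push_cast
    refine Finset.sum_le_sum fun s hs => ?_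
    have hsb : b < costR n s := (Finset.mem_filter.1 hs).2
    have : 0 ≤ lam * (costR n s - b) := mul_nonneg hlam0 (by linarith)
    exact Real.one_le_exp this
  have step2 : (∑ s ∈ Bad, Real.exp (lam * (costR n s - b))) ≤
      ∑ s : Fin n → Fin 4, Real.exp (lam * (costR n s - b)) :=
    Finset.sum_le_sum_of_subset_of_nonneg (Finset.filter_subset _ _)
      (fun s _ _ => (Real.exp_pos _).le)
  have step3 : (∑ s : Fin n → Fin 4, Real.exp (lam * (costR n s - b))) =
      Real.exp (-(lam * b)) * (∑ c : Fin 4, Real.exp (lam * (c.val + 1))) ^ n := by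
    rw [← sumExp lam n 0, Finset.mul_sum]
    refine Finset.sum_congr rfl fun s _ => ?_
    rw [← Real.exp_add, costR]
    ring_nf
  have step4 : Real.exp (-(lam * b)) * (∑ c : Fin 4, Real.exp (lam * (c.val + 1))) ^ n ≤
      Real.exp (-(lam * b)) * (4 * Real.exp (2.5 * lam + 9 * lam ^ 2 / 8)) ^ n := by
    apply mul_le_mul_of_nonneg_left _ (Real.exp_pos _).le
    apply pow_le_pow_left₀ (Finset.sum_nonneg fun c _ => (Real.exp_pos _).le) (mgf_bound lam)
  have hexp : Real.exp (-(lam * b)) * (4 * Real.exp (2.5 * lam + 9 * lam ^ 2 / 8)) ^ n =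
      4 ^ n * Real.exp (n * (2.5 * lam + 9 * lam ^ 2 / 8) - lam * b) := by
    rw [mul_pow, ← Real.exp_nat_mul, sub_eq_add_neg, Real.exp_add]
    ring
  have hexpo : (n : ℝ) * (2.5 * lam + 9 * lam ^ 2 / 8) - lam * b = -(2 * Real.log M) := by
    have hne : (n:ℝ) ≠ 0 := ne_of_gt hn0
    have key : (n:ℝ) * (2.5 * lam + 9 * lam ^ 2 / 8) - lam * b = -(2/(9*(n:ℝ))) * t ^ 2 := by
      rw [hlam, hb]; field_simp; ring
    rw [key, ht2]
    field_simp
  have hfin : Real.exp (-(2 * Real.log M)) = 1 / M ^ 2 := by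
    rw [Real.exp_neg, show (2:ℝ) * Real.log M = Real.log M + Real.log M by ring,
      Real.exp_add, Real.exp_log hM0]
    rw [one_div, sq]
  calc (Bad.card : ℝ) ≤ Real.exp (-(lam * b)) * (∑ c : Fin 4, Real.exp (lam * (c.val + 1))) ^ n := by
        rw [← step3]; exact step1.trans step2
    _ ≤ 4 ^ n * Real.exp (n * (2.5 * lam + 9 * lam ^ 2 / 8) - lam * b) := by rw [← hexp]; exact step4
    _ = 4 ^ n / M ^ 2 := by rw [hexpo, hfin]; ring

def coordEquiv {M : ℕ} (α : Type*) [DecidableEq (Fin M)] (i : Fin M) (Q : α → Prop) :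
    {F : Fin M → α // Q (F i)} ≃ {x : α // Q x} × ({j : Fin M // j ≠ i} → α) where
  toFun F := (⟨F.1 i, F.2⟩, fun j => F.1 j.1)
  invFun p := ⟨fun j => if h : j = i then p.1.1 else p.2 ⟨j, h⟩, by simp [p.1.2]⟩
  left_inv F := Subtype.ext (funext fun j => by
    by_cases h : j = i
    · subst h; simp
    · simp [h])
  right_inv p := by
    obtain ⟨⟨x, hx⟩, G⟩ := p
    refine Prod.ext ?_ ?_
    · simp
    · funext j
      simp [j.2]

lemma card_filter_coord {M : ℕ} (α : Type*) [Fintype α] [DecidableEq α] (i : Fin M)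
    (Q : α → Prop) [DecidablePred Q] :
    (univ.filter (fun F : Fin M → α => Q (F i))).card
      = (univ.filter Q).card * Fintype.card ({j : Fin M // j ≠ i} → α) := by
  rw [← Fintype.card_subtype, ← Fintype.card_subtype, ← Fintype.card_prod]
  exact Fintype.card_congr (coordEquiv α i Q)

lemma card_ne_fun {M : ℕ} (α : Type*) [Fintype α] [DecidableEq α] (i : Fin M) :
    Fintype.card ({j : Fin M // j ≠ i} → α) = Fintype.card α ^ (M - 1) := by
  rw [Fintype.card_fun]
  congr 1
  have : Fintype.card {j : Fin M // j ≠ i} = Fintype.card (Fin M) - Fintype.card {j : Fin M // j = i} :=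
    Fintype.card_subtype_compl _
  rw [this, Fintype.card_subtype_eq, Fintype.card_fin]

/-- Length of the shortest common supersequence of a finite family of strands. -/
noncomputable def scsLen {M : ℕ} (G : Fin M → List (Fin 4)) : ℕ :=
  sInf {m | ∃ L : List (Fin 4), L.length = m ∧ ∀ i, (G i).Sublist L}

/-- For M ≥ n i.i.d. uniform strands in {A,C,G,T}^n, with probability at least
1 - 1/n the shortest common supersequence has length at most 2.5n + 3√(n log M).
(Probability is expressed by counting over the uniform sample space of families.) -/
theorem stmt5 (n M : ℕ) (hM : n ≤ M) :
    (1 - 1 / (n : ℝ)) * (Fintype.card (Fin M → Fin n → Fin 4)) ≤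
      ((Finset.univ.filter (fun F : Fin M → Fin n → Fin 4 =>
        (scsLen (fun i => List.ofFn (F i)) : ℝ)
          ≤ 2.5 * n + 3 * Real.sqrt (n * Real.log M))).card : ℝ) := by
  rcases Nat.lt_or_ge n 2 with hn | hn
  · interval_cases n
    · -- n = 0
      rw [Finset.filter_true_of_mem]
      · simp only [Nat.cast_zero, div_zero, sub_zero, one_mul, Finset.card_univ]
        exact le_rfl
      · intro F _
        have h0 : scsLen (fun i => List.ofFn (F i)) = 0 := by
          have hm : 0 ∈ {m | ∃ L : List (Fin 4), L.length = m ∧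
              ∀ i, (List.ofFn (F i)).Sublist L} := ⟨[], rfl, fun i => by simp⟩
          exact Nat.le_zero.mp (Nat.sInf_le hm)
        rw [h0]
        simp
    · -- n = 1
      norm_num
  · -- main case
    have hn0 : (0:ℝ) < n := by exact_mod_cast Nat.lt_of_lt_of_le (by norm_num) hn
    have hM2 : 2 ≤ M := le_trans hn hM
    have hM0 : (0:ℝ) < M := by exact_mod_cast Nat.lt_of_lt_of_le (by norm_num) hM2
    set b : ℝ := 2.5 * n + 3 * Real.sqrt (n * Real.log M) with hb
    have hb0 : (0:ℝ) ≤ b := by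
      rw [hb]; positivity
    -- good families have small scsLen
    have hgood : ∀ F : Fin M → Fin n → Fin 4, (∀ i, costR n (F i) ≤ b) →
        (scsLen (fun i => List.ofFn (F i)) : ℝ) ≤ b := by
      intro F hF
      have hmem : Nat.floor b ∈ {m | ∃ L : List (Fin 4), L.length = m ∧
          ∀ i, (List.ofFn (F i)).Sublist L} := by
        refine ⟨pat (Nat.floor b), pat_length _, fun i => ?_⟩
        have hle : 0 + (steps 0 (List.ofFn (F i))).sum ≤ Nat.floor b := by
          simpa using Nat.le_floor (hF i)
        simpa using embed (List.ofFn (F i)) 0 (Nat.floor b) hle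
      have h1 : scsLen (fun i => List.ofFn (F i)) ≤ Nat.floor b := Nat.sInf_le hmem
      exact le_trans (Nat.cast_le.2 h1) (Nat.floor_le hb0)
    have hsub : univ.filter (fun F : Fin M → Fin n → Fin 4 => ∀ i, costR n (F i) ≤ b) ⊆
        univ.filter (fun F : Fin M → Fin n → Fin 4 =>
          (scsLen (fun i => List.ofFn (F i)) : ℝ) ≤ 2.5 * n + 3 * Real.sqrt (n * Real.log M)) := by
      intro F hF
      rw [Finset.mem_filter] at hF ⊢
      exact ⟨hF.1, hgood F hF.2⟩
    -- counting
    have hsplit : (univ.filter (fun F : Fin M → Fin n → Fin 4 => ∀ i, costR n (F i) ≤ b)).card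
        + (univ.filter (fun F : Fin M → Fin n → Fin 4 => ¬ ∀ i, costR n (F i) ≤ b)).card
        = Fintype.card (Fin M → Fin n → Fin 4) := by
      rw [Finset.card_filter_add_card_filter_not, Finset.card_univ]
    have hub : (univ.filter (fun F : Fin M → Fin n → Fin 4 => ¬ ∀ i, costR n (F i) ≤ b)).card
        ≤ ∑ i : Fin M, (univ.filter (fun F : Fin M → Fin n → Fin 4 => b < costR n (F i))).card := by
      refine le_trans (Finset.card_le_card ?_) Finset.card_biUnion_le
      intro F hF
      rw [Finset.mem_filter] at hF
      obtain ⟨i, hi⟩ := not_forall.1 hF.2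
      exact Finset.mem_biUnion.2 ⟨i, Finset.mem_univ _,
        Finset.mem_filter.2 ⟨Finset.mem_univ _, not_le.1 hi⟩⟩
    have hcoord : ∀ i : Fin M,
        (univ.filter (fun F : Fin M → Fin n → Fin 4 => b < costR n (F i))).card
        = (univ.filter (fun s : Fin n → Fin 4 => b < costR n s)).card * (4 ^ n) ^ (M - 1) := by
      intro i
      rw [card_filter_coord (Fin n → Fin 4) i (fun s => b < costR n s), card_ne_fun]
      congr 2
      rw [Fintype.card_fun, Fintype.card_fin, Fintype.card_fin]
    have htot : Fintype.card (Fin M → Fin n → Fin 4) = (4 ^ n) ^ M := by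
      simp [Fintype.card_fun]
    have hbadR : ((univ.filter (fun s : Fin n → Fin 4 => b < costR n s)).card : ℝ)
        ≤ 4 ^ n / M ^ 2 := bad_count n M hn hM
    -- assemble over ℝ
    set Nbad : ℕ := (univ.filter (fun s : Fin n → Fin 4 => b < costR n s)).card with hNbad
    set Kgood : ℕ := (univ.filter (fun F : Fin M → Fin n → Fin 4 => ∀ i, costR n (F i) ≤ b)).card with hKgood
    set Kbad : ℕ := (univ.filter (fun F : Fin M → Fin n → Fin 4 => ¬ ∀ i, costR n (F i) ≤ b)).card with hKbad
    have hne : (n:ℝ) ≠ 0 := ne_of_gt hn0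
    have hMsub : (M - 1) + 1 = M := Nat.succ_pred_eq_of_pos (lt_of_lt_of_le (by norm_num) hM2)
    have hpowsplit : ((4:ℝ) ^ n) ^ (M - 1) * 4 ^ n = ((4:ℝ) ^ n) ^ M := by
      rw [← pow_succ, hMsub]
    have hsumval : ∑ i : Fin M, (univ.filter
        (fun F : Fin M → Fin n → Fin 4 => b < costR n (F i))).card
        = M * (Nbad * (4 ^ n) ^ (M - 1)) := by
      rw [Finset.sum_congr rfl (fun i _ => hcoord i), Finset.sum_const, Finset.card_univ,
        Fintype.card_fin, smul_eq_mul]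
    have hubN : Kbad ≤ M * (Nbad * (4 ^ n) ^ (M - 1)) := by rw [← hsumval]; exact hub
    have hKbadR : (Kbad : ℝ) ≤ ((4:ℝ) ^ n) ^ M / M := by
      have h2 : (Kbad : ℝ) ≤ (M : ℝ) * ((Nbad : ℝ) * ((4:ℝ) ^ n) ^ (M - 1)) := by
        exact_mod_cast hubN
      calc (Kbad : ℝ) ≤ (M : ℝ) * ((Nbad : ℝ) * ((4:ℝ) ^ n) ^ (M - 1)) := h2
        _ ≤ (M : ℝ) * ((4 ^ n / M ^ 2) * ((4:ℝ) ^ n) ^ (M - 1)) := by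
            apply mul_le_mul_of_nonneg_left _ (le_of_lt hM0)
            exact mul_le_mul_of_nonneg_right hbadR (by positivity)
        _ = ((4:ℝ) ^ n) ^ M / M := by
            rw [← hpowsplit]
            field_simp
    have hcast : (Kgood : ℝ) + (Kbad : ℝ) = ((4:ℝ) ^ n) ^ M := by
      have := hsplit
      rw [htot] at this
      exact_mod_cast this
    have hMn : ((4:ℝ) ^ n) ^ M / M ≤ ((4:ℝ) ^ n) ^ M / n := by
      apply div_le_div_of_nonneg_left (by positivity) hn0
      exact_mod_cast hM
    have heq : (1 - 1 / (n:ℝ)) * ((4:ℝ) ^ n) ^ M = ((4:ℝ) ^ n) ^ M - ((4:ℝ) ^ n) ^ M / n := by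
      field_simp
    have hKgoodR : (1 - 1 / (n:ℝ)) * ((4:ℝ) ^ n) ^ M ≤ (Kgood : ℝ) := by linarith
    calc (1 - 1 / (n : ℝ)) * (Fintype.card (Fin M → Fin n → Fin 4))
        = (1 - 1 / (n:ℝ)) * ((4:ℝ) ^ n) ^ M := by rw [htot]; push_cast; ring
      _ ≤ (Kgood : ℝ) := hKgoodR
      _ ≤ _ := by exact_mod_cast Finset.card_le_card hsub
end

section
/- Let M ≥ n and let S be a set of M i.i.d. random strings in {A,C,G,T}^n each drawn uniformly from strings with no two consecutive equal characters. Then with probability at least 1 − 1/n, the length of a shortest common supersequence of all strings in S is at most 2n + 3√(n log M). -/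
/-!
Every strand is a subsequence of the cyclic word `0 1 2 3 0 1 2 3 …`. Embedding a strand greedily,
its first letter costs at most `4` letters of the cyclic word, and each further letter costs
`1`, `2` or `3`, according to which of the three letters different from its predecessor it is.
For a uniform homopolymer-free strand these increments are independent and uniform on
`{1, 2, 3}`, so the cost concentrates around `2n`: a Chernoff bound with
`eˣ + e²ˣ + e³ˣ ≤ 3 e^(2x + x²/2)` and a union bound over the `M` strands show that the prefix of
length `2n + 3√(n log M)` is a common supersequence with probability at least `1 - 1/n`.
For `n ≤ 5` the worst case `3n + 1` is already below the threshold.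
-/

open Finset
open scoped Classical

/-- Strands of length n over {A,C,G,T} with no two consecutive equal characters. -/
def NoHomo (n : ℕ) : Type :=
  {S : Fin n → Fin 4 // List.Chain' (· ≠ ·) (List.ofFn S)}

noncomputable instance (n : ℕ) : Fintype (NoHomo n) := by
  unfold NoHomo; infer_instance

open Real

lemma Fin.val_sub_add_one_add_one {n : ℕ} [NeZero n] {a c : Fin n} (h : c ≠ a) :
    (c - (a + 1)).val + 1 = (c - a).val := by
  rw [← sub_sub, Fin.val_sub_one_of_ne_zero (sub_ne_zero.2 h)]
  have := Fin.pos_iff_ne_zero.2 (sub_ne_zero.2 h)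
  omega

section CyclicWord

variable {q : ℕ} [NeZero q]

def cyclicWord : Fin q → ℕ → List (Fin q)
  | _, 0 => []
  | a, k + 1 => a :: cyclicWord (a + 1) k

/-- The length of the prefix of `cyclicWord a` used by the greedy embedding of `l`. -/
def cyclicCost : Fin q → List (Fin q) → ℕ
  | _, [] => 0
  | a, c :: l => (c - a).val + 1 + cyclicCost (c + 1) l

lemma length_cyclicWord (a : Fin q) (k : ℕ) : (cyclicWord a k).length = k := by
  induction k generalizing a with
  | zero => rfl
  | succ k ih => simp [cyclicWord, ih]

lemma sublist_cyclicWord_of_cyclicCost_le :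
    ∀ {k : ℕ} {l : List (Fin q)} {a : Fin q}, cyclicCost a l ≤ k → l.Sublist (cyclicWord a k)
  | _, [], _, _ => List.nil_sublist _
  | 0, _ :: _, _, h => by simp [cyclicCost] at h
  | k + 1, c :: l, a, h => by
    by_cases hc : c = a
    · subst hc
      refine .cons_cons c (sublist_cyclicWord_of_cyclicCost_le ?_)
      simp only [cyclicCost, sub_self, Fin.val_zero] at h
      omega
    · have hskip := Fin.val_sub_add_one_add_one hc
      refine .cons a (sublist_cyclicWord_of_cyclicCost_le ?_)
      simp only [cyclicCost] at h ⊢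
      omega

lemma cyclicCost_succ_le_of_chain :
    ∀ {p : Fin q} {l : List (Fin q)}, List.IsChain (· ≠ ·) (p :: l) →
      cyclicCost (p + 1) l ≤ (q - 1) * l.length
  | _, [], _ => by simp [cyclicCost]
  | p, c :: l, h => by
    rw [List.isChain_cons_cons] at h
    have hstep := Fin.val_sub_add_one_add_one (Ne.symm h.1)
    have hlt := (c - p).isLt
    have ih := cyclicCost_succ_le_of_chain h.2
    simp only [cyclicCost, List.length_cons, Nat.mul_succ]
    omega

lemma cyclicCost_zero_le_of_chain {l : List (Fin q)} (h : List.IsChain (· ≠ ·) l) :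
    cyclicCost 0 l ≤ (q - 1) * l.length + 1 := by
  cases l with
  | nil => simp [cyclicCost]
  | cons c l =>
    have ih := cyclicCost_succ_le_of_chain h
    have hlt := c.isLt
    simp only [cyclicCost, sub_zero, List.length_cons, Nat.mul_succ]
    omega

end CyclicWord

def NoHomo.cost {n : ℕ} (s : NoHomo n) : ℕ := cyclicCost 0 (List.ofFn s.1)

lemma NoHomo.cost_le {n : ℕ} (s : NoHomo n) : s.cost ≤ 3 * n + 1 := by
  simpa [NoHomo.cost] using cyclicCost_zero_le_of_chain s.2

lemma scsLen_le_of_forall_cost_le {n M : ℕ} (F : Fin M → NoHomo n) {T : ℝ} (hT : 0 ≤ T)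
    (h : ∀ i, ((F i).cost : ℝ) ≤ T) : (scsLen (fun i => List.ofFn (F i).1) : ℝ) ≤ T := by
  have hscs : scsLen (fun i => List.ofFn (F i).1) ≤ ⌊T⌋₊ :=
    Nat.sInf_le ⟨cyclicWord 0 ⌊T⌋₊, length_cyclicWord _ _,
      fun i => sublist_cyclicWord_of_cyclicCost_le (Nat.le_floor (h i))⟩
  exact (Nat.cast_le.mpr hscs).trans (Nat.floor_le hT)

lemma sum_pi_fin_succ {α β : Type*} [Fintype α] [AddCommMonoid β] {m : ℕ}
    (f : (Fin (m + 1) → α) → β) :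
    ∑ S, f S = ∑ c, ∑ S : Fin m → α, f (Fin.cons c S) := by
  rw [← (Fin.consEquiv fun _ => α).sum_comp, Fintype.sum_prod_type]
  rfl

noncomputable def stepWeight (x : ℝ) (p c : Fin 4) : ℝ :=
  if c ≠ p then exp (x * ((c - (p + 1)).val + 1)) else 0

noncomputable def chainWeight (x : ℝ) (p : Fin 4) (l : List (Fin 4)) : ℝ :=
  if List.IsChain (· ≠ ·) (p :: l) then exp (x * cyclicCost (p + 1) l) else 0

lemma chainWeight_cons (x : ℝ) (p c : Fin 4) (l : List (Fin 4)) :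
    chainWeight x p (c :: l) = stepWeight x p c * chainWeight x c l := by
  by_cases hc : c = p
  · simp [chainWeight, stepWeight, hc]
  by_cases hl : List.IsChain (· ≠ ·) (c :: l)
  · rw [chainWeight, chainWeight, stepWeight, if_pos (List.isChain_cons_cons.2 ⟨Ne.symm hc, hl⟩),
      if_pos hc, if_pos hl, cyclicCost, ← exp_add]
    push_cast
    ring_nf
  · rw [chainWeight, chainWeight, if_neg fun h => hl (List.isChain_cons_cons.1 h).2, if_neg hl,
      mul_zero]

/-- The increment `(c - (p + 1)).val + 1` runs through `1, 2, 3` as `c` runs through the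
letters different from `p`. -/
lemma sum_stepWeight (x : ℝ) (p : Fin 4) :
    ∑ c, stepWeight x p c = exp x + exp (2 * x) + exp (3 * x) := by
  have h2 : ((-2 : Fin 4) : ℕ) = 2 := rfl
  have h3 : ((-3 : Fin 4) : ℕ) = 1 := rfl
  fin_cases p <;> simp [stepWeight, Fin.sum_univ_four, h2, h3] <;> ring_nf

lemma sum_chainWeight (x : ℝ) (m : ℕ) (p : Fin 4) :
    ∑ S : Fin m → Fin 4, chainWeight x p (List.ofFn S) =
      (exp x + exp (2 * x) + exp (3 * x)) ^ m := by
  induction m generalizing p with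
  | zero => simp [chainWeight, cyclicCost]
  | succ m ih =>
    simp only [sum_pi_fin_succ, List.ofFn_cons, chainWeight_cons, ← Finset.mul_sum, ih,
      ← Finset.sum_mul, sum_stepWeight, pow_succ']

lemma sum_noHomo {n : ℕ} (f : (Fin n → Fin 4) → ℝ) :
    ∑ s : NoHomo n, f s.1 =
      ∑ S : Fin n → Fin 4, if List.IsChain (· ≠ ·) (List.ofFn S) then f S else 0 := by
  rw [← Finset.sum_filter]
  exact (Finset.sum_subtype _ (fun _ => by simp; rfl) f).symm

lemma sum_exp_cost (x : ℝ) (m : ℕ) :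
    ∑ s : NoHomo (m + 1), exp (x * s.cost) =
      (∑ c : Fin 4, exp (x * (c.val + 1))) * (exp x + exp (2 * x) + exp (3 * x)) ^ m := by
  refine (sum_noHomo fun S => exp (x * cyclicCost 0 (List.ofFn S))).trans ?_
  rw [sum_pi_fin_succ, Finset.sum_mul]
  refine Finset.sum_congr rfl fun c _ => ?_
  rw [← sum_chainWeight x m c, Finset.mul_sum]
  refine Finset.sum_congr rfl fun S _ => ?_
  rw [List.ofFn_cons, chainWeight]
  split_ifs
  · rw [cyclicCost, sub_zero, ← exp_add]
    push_cast
    ring_nf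
  · rw [mul_zero]

lemma card_noHomo_succ (m : ℕ) : (Fintype.card (NoHomo (m + 1)) : ℝ) = 4 * 3 ^ m := by
  have h := sum_exp_cost 0 m
  norm_num [Fin.sum_univ_four] at h
  exact h

lemma sum_exp_first_le {x : ℝ} (hx : 0 ≤ x) :
    ∑ c : Fin 4, exp (x * (c.val + 1)) ≤ 4 * exp (4 * x) := by
  calc ∑ c : Fin 4, exp (x * (c.val + 1)) ≤ ∑ _c : Fin 4, exp (4 * x) := by
        refine Finset.sum_le_sum fun c _ => exp_le_exp.2 ?_
        have hc : (c.val : ℝ) ≤ 3 := by exact_mod_cast Nat.le_of_lt_succ c.isLt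
        nlinarith
    _ = 4 * exp (4 * x) := by simp

lemma exp_add_exp_two_mul_add_exp_three_mul_le (x : ℝ) :
    exp x + exp (2 * x) + exp (3 * x) ≤ 3 * exp (2 * x + x ^ 2 / 2) := by
  have e1 : exp x = exp (2 * x) * exp (-x) := by rw [← exp_add]; ring_nf
  have e3 : exp (3 * x) = exp (2 * x) * exp x := by rw [← exp_add]; ring_nf
  have hcosh := cosh_le_exp_half_sq x
  have hone := one_le_exp (by positivity : 0 ≤ x ^ 2 / 2)
  calc exp x + exp (2 * x) + exp (3 * x) = exp (2 * x) * (2 * cosh x + 1) := by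
        rw [cosh_eq, e3, e1]; ring
    _ ≤ exp (2 * x) * (3 * exp (x ^ 2 / 2)) := by gcongr; linarith
    _ = 3 * exp (2 * x + x ^ 2 / 2) := by rw [exp_add]; ring

lemma card_cost_gt_le (m : ℕ) {x : ℝ} (hx : 0 ≤ x) (T : ℝ) :
    (#{s : NoHomo (m + 1) | T < s.cost} : ℝ) ≤
      Fintype.card (NoHomo (m + 1)) * exp (4 * x + m * (2 * x + x ^ 2 / 2) - x * T) := by
  have markov : (#{s : NoHomo (m + 1) | T < s.cost} : ℝ) * exp (x * T) ≤
      ∑ s : NoHomo (m + 1), exp (x * s.cost) := by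
    rw [← nsmul_eq_mul]
    calc _ ≤ ∑ s ∈ {s : NoHomo (m + 1) | T < s.cost}, exp (x * s.cost) :=
          card_nsmul_le_sum _ _ _ fun s hs =>
            exp_le_exp.2 (mul_le_mul_of_nonneg_left (mem_filter.1 hs).2.le hx)
      _ ≤ _ := sum_le_sum_of_subset_of_nonneg (filter_subset _ _) fun _ _ _ => (exp_pos _).le
  have hsum : ∑ s : NoHomo (m + 1), exp (x * s.cost) ≤
      4 * 3 ^ m * exp (4 * x + m * (2 * x + x ^ 2 / 2)) := by
    rw [sum_exp_cost]
    calc _ ≤ (4 * exp (4 * x)) * (3 * exp (2 * x + x ^ 2 / 2)) ^ m := by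
          refine mul_le_mul (sum_exp_first_le hx) ?_ (by positivity) (by positivity)
          exact pow_le_pow_left₀ (by positivity) (exp_add_exp_two_mul_add_exp_three_mul_le x) m
      _ = _ := by rw [mul_pow, ← exp_nat_mul, exp_add]; ring
  rw [card_noHomo_succ]
  calc (#{s : NoHomo (m + 1) | T < s.cost} : ℝ)
      = #{s : NoHomo (m + 1) | T < s.cost} * exp (x * T) * exp (-(x * T)) := by
        rw [mul_assoc, ← exp_add, add_neg_cancel, exp_zero, mul_one]
    _ ≤ 4 * 3 ^ m * exp (4 * x + m * (2 * x + x ^ 2 / 2)) * exp (-(x * T)) := by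
        exact mul_le_mul_of_nonneg_right (markov.trans hsum) (exp_pos _).le
    _ = _ := by rw [mul_assoc, ← exp_add, ← sub_eq_add_neg]

/-- The union bound, via Bernoulli's inequality `1 - M b ≤ (1 - b) ^ M`. -/
lemma one_sub_mul_le_card_filter_forall {α : Type*} [Fintype α] (p : α → Prop) (M : ℕ) :
    (1 - M * ((#{a | ¬ p a} : ℝ) / Fintype.card α)) * Fintype.card α ^ M ≤
      #{F : Fin M → α | ∀ i, p (F i)} := by
  set N := Fintype.card α
  set B := #{a | ¬ p a}
  have hBN : B ≤ N := card_le_univ _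
  have hgood : #{F : Fin M → α | ∀ i, p (F i)} = #{a | p a} ^ M := by
    have : ({F : Fin M → α | ∀ i, p (F i)} : Finset _) = Fintype.piFinset fun _ => {a | p a} := by
      ext F
      simp [Fintype.mem_piFinset]
    rw [this, Fintype.card_piFinset, prod_const, card_univ, Fintype.card_fin]
  have hsplit : #{a | p a} + B = N := card_filter_add_card_filter_not _
  have hfrac : (B : ℝ) / N ≤ 1 := div_le_one_of_le₀ (by exact_mod_cast hBN) (Nat.cast_nonneg _)
  have bernoulli : 1 - M * ((B : ℝ) / N) ≤ (1 - (B : ℝ) / N) ^ M := by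
    simpa [← sub_eq_add_neg] using one_add_mul_le_pow (a := -((B : ℝ) / N)) (by linarith) M
  calc (1 - M * ((B : ℝ) / N)) * N ^ M ≤ (1 - (B : ℝ) / N) ^ M * N ^ M := by
        gcongr
    _ = ((N : ℝ) - B) ^ M := by
        rw [← mul_pow, sub_mul, one_mul,
          div_mul_cancel_of_imp fun h => by rw [Nat.cast_eq_zero] at h ⊢; omega]
    _ = _ := by rw [hgood, ← hsplit]; push_cast; ring

lemma three_mul_add_one_le {n M : ℕ} (h2 : 2 ≤ n) (h5 : n ≤ 5) (hM : n ≤ M) :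
    (3 * n + 1 : ℝ) ≤ 2 * n + 3 * √(n * log M) := by
  have hn2 : (2 : ℝ) ≤ n := by exact_mod_cast h2
  have hn5 : (n : ℝ) ≤ 5 := by exact_mod_cast h5
  have hlog : 1 - (n : ℝ)⁻¹ ≤ log M :=
    (one_sub_inv_le_log_of_pos (by positivity)).trans
      (log_le_log (by positivity) (by exact_mod_cast hM))
  have hnlog : (n : ℝ) - 1 ≤ n * log M := by
    have := mul_le_mul_of_nonneg_left hlog (by positivity : (0 : ℝ) ≤ n)
    rwa [mul_sub, mul_one, mul_inv_cancel₀ (by positivity)] at this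
  have hsq : ((n : ℝ) + 1) ^ 2 ≤ (3 * √(n * log M)) ^ 2 := by
    rw [mul_pow, sq_sqrt (by linarith)]
    nlinarith
  have := (pow_le_pow_iff_left₀ (by positivity) (by positivity) two_ne_zero).1 hsq
  linarith

lemma exists_chernoff_exponent_le {n M : ℕ} (h5 : 5 ≤ n) (hM : n ≤ M) :
    ∃ x : ℝ, 0 ≤ x ∧
      4 * x + (n - 1 : ℝ) * (2 * x + x ^ 2 / 2) - x * (2 * n + 3 * √(n * log M)) ≤
        -log (n * M) := by
  have hn : (5 : ℝ) ≤ n := by exact_mod_cast h5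
  have hnM : (n : ℝ) ≤ M := by exact_mod_cast hM
  have hL : 2 * log 2 ≤ log M := by
    have h4 := log_le_log (by norm_num) (show (2 : ℝ) ^ 2 ≤ M by linarith)
    rwa [log_pow, Nat.cast_ofNat] at h4
  have hlog2 := log_two_gt_d9
  have hlogn : log n ≤ log M := log_le_log (by positivity) hnM
  have hlognM : log (n * M) = log n + log M :=
    log_mul (by linarith : (0 : ℝ) < n).ne' (by linarith : (0 : ℝ) < M).ne'
  set L := log M
  set y := √(L / n) with hy
  have hy0 : 0 ≤ y := sqrt_nonneg _
  have hLy : L = n * y ^ 2 := by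
    rw [hy, sq_sqrt (div_nonneg (by linarith) (by positivity))]
    field_simp
  have hsqrt : √(n * L) = n * y := by
    rw [hLy, ← mul_assoc, ← sq, ← mul_pow, sqrt_sq (by positivity)]
  have hny : 2.4 ≤ n * y := by nlinarith
  -- With `x = 3y` the exponent is `6y - 4.5 (n + 1) y²`, and `log (n M) ≤ 2 n y²`.
  refine ⟨3 * y, by positivity, ?_⟩
  rw [hsqrt, hlognM]
  nlinarith [mul_nonneg hy0 (by linarith : (0 : ℝ) ≤ 2.5 * (n * y) - 6)]

lemma NoHomo.cost_le_threshold_of_le_five {n M : ℕ} (hn : n ≠ 1) (h5 : n ≤ 5) (hM : n ≤ M) (s : NoHomo n) :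
    (s.cost : ℝ) ≤ 2 * n + 3 * √(n * log M) := by
  rcases Nat.lt_or_ge n 2 with h2 | h2
  · obtain rfl : n = 0 := by omega
    simp [NoHomo.cost, cyclicCost]
  · calc (s.cost : ℝ) ≤ 3 * n + 1 := by exact_mod_cast s.cost_le
      _ ≤ _ := three_mul_add_one_le h2 h5 hM

lemma mul_card_cost_gt_div_le {n M : ℕ} (hn : n ≠ 1) (hM : n ≤ M) :
    M * ((#{s : NoHomo n | ¬ (s.cost : ℝ) ≤ 2 * n + 3 * √(n * log M)} : ℝ) /
      Fintype.card (NoHomo n)) ≤ 1 / n := by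
  rcases le_or_gt n 5 with h5 | h5
  · rw [filter_false_of_mem fun s _ => not_not.2 (s.cost_le_threshold_of_le_five hn h5 hM)]
    simp
  obtain ⟨m, rfl⟩ : ∃ m, n = m + 1 := ⟨n - 1, by omega⟩
  obtain ⟨x, hx, hE⟩ := exists_chernoff_exponent_le h5.le hM
  have hm : ((m + 1 : ℕ) : ℝ) - 1 = m := by push_cast; ring
  rw [hm] at hE
  have hbad := card_cost_gt_le m hx (2 * (m + 1 : ℕ) + 3 * √((m + 1 : ℕ) * log M))
  have hN : (0 : ℝ) < Fintype.card (NoHomo (m + 1)) := by rw [card_noHomo_succ]; positivity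
  have hM0 : (0 : ℝ) < M := by exact_mod_cast (by omega : 0 < M)
  simp only [not_le]
  calc (M : ℝ) * (_ / _) ≤ M * exp (-log ((m + 1 : ℕ) * M)) := by
        gcongr
        rw [div_le_iff₀ hN]
        exact (hbad.trans (mul_le_mul_of_nonneg_left (exp_le_exp.2 hE) hN.le)).trans_eq
          (mul_comm _ _)
    _ = 1 / (m + 1 : ℕ) := by
        rw [exp_neg, exp_log (by positivity)]
        field_simp

/-- For M ≥ n i.i.d. strands drawn uniformly from length-n strands with no
homopolymers, with probability at least 1 - 1/n the shortest common
supersequence has length at most 2n + 3√(n log M). -/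
theorem stmt6 (n M : ℕ) (hM : n ≤ M) :
    (1 - 1 / (n : ℝ)) * (Fintype.card (Fin M → NoHomo n)) ≤
      ((Finset.univ.filter (fun F : Fin M → NoHomo n =>
        (scsLen (fun i => List.ofFn (F i).1) : ℝ)
          ≤ 2 * n + 3 * Real.sqrt (n * Real.log M))).card : ℝ) := by
  rcases eq_or_ne n 1 with rfl | hn
  · simp
  set T : ℝ := 2 * n + 3 * √(n * log M)
  calc (1 - 1 / (n : ℝ)) * Fintype.card (Fin M → NoHomo n)
      ≤ (1 - M * ((#{s : NoHomo n | ¬ (s.cost : ℝ) ≤ T} : ℝ) / Fintype.card (NoHomo n))) *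
          Fintype.card (NoHomo n) ^ M := by
        rw [Fintype.card_fun, Fintype.card_fin, Nat.cast_pow]
        gcongr
        exact mul_card_cost_gt_div_le hn hM
    _ ≤ #{F : Fin M → NoHomo n | ∀ i, ((F i).cost : ℝ) ≤ T} :=
        one_sub_mul_le_card_filter_forall _ M
    _ ≤ _ := by
        have hT : 0 ≤ T := by positivity
        exact_mod_cast card_le_card <|
          monotone_filter_right _ fun F _ hF => scsLen_le_of_forall_cost_le F hT hF
end

section
/- Fix ε > 0 and let M ≥ 21/ε². Let S be a set of M i.i.d. uniformly random strings in {A,C,G,T}^n. Then with probability at least 1 − exp(−n), the length of every common supersequence of all strings in S is at least (2.5 − ε)n. -/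
open Finset Real
open scoped Classical

/-!
Union bound over the candidate supersequences of length `⌊(5/2 - ε) n⌋` (shorter ones are padded):
it suffices that few strings are subsequences of a fixed list `L`. Embedding `w` into `L` greedily
and recording, for each letter, its rank among the letters of the remaining suffix ordered by
first occurrence injects the subsequences of `L` into rank sequences `r ∈ {0,1,2,3}ⁿ` with
`∑ (rᵢ + 1) ≤ |L|`, because a letter of rank `k` is preceded by at least `k` skipped positions.
Since `rᵢ + 1` is uniform on `{1,2,3,4}` with mean `5/2`, a Chernoff bound (with
`cosh x ≤ exp (x²/2)`) shows that at most a fraction `exp (t |L| - 5tn/2 + 9t²n/8)` of the rank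
sequences qualify. With `t = 4ε/9` the `M`-th power of this fraction is at most `exp (-14n/3)`,
which beats the `4^|L| ≤ exp (1.39 · 5n/2)` candidates.
-/

theorem card_filter_sum_le_le_exp_mul_pow {ι β : Type*} [Fintype ι] [DecidableEq ι] [Fintype β]
    (f : β → ℝ) (ℓ : ℝ) {t : ℝ} (ht : 0 ≤ t) :
    (#{r : ι → β | ∑ i, f (r i) ≤ ℓ} : ℝ) ≤
      exp (t * ℓ) * (∑ b, exp (-t * f b)) ^ Fintype.card ι := by
  have hmarkov : ∀ r : ι → β, ∑ i, f (r i) ≤ ℓ → 1 ≤ exp (t * ℓ) * ∏ i, exp (-t * f (r i)) := by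
    intro r hr
    rw [← exp_sum, ← exp_add, ← mul_sum]
    exact one_le_exp (by nlinarith [mul_le_mul_of_nonneg_left hr ht])
  calc (#{r : ι → β | ∑ i, f (r i) ≤ ℓ} : ℝ)
      = ∑ r : ι → β with ∑ i, f (r i) ≤ ℓ, (1 : ℝ) := by rw [sum_const, nsmul_one]
    _ ≤ ∑ r : ι → β with ∑ i, f (r i) ≤ ℓ, exp (t * ℓ) * ∏ i, exp (-t * f (r i)) :=
        sum_le_sum fun r hr => hmarkov r (mem_filter.mp hr).2
    _ ≤ ∑ r : ι → β, exp (t * ℓ) * ∏ i, exp (-t * f (r i)) :=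
        sum_le_sum_of_subset_of_nonneg (filter_subset _ _) fun _ _ _ => by positivity
    _ = exp (t * ℓ) * (∑ b, exp (-t * f b)) ^ Fintype.card ι := by
        rw [← mul_sum, ← card_univ, ← prod_const, Fintype.prod_sum]

section GreedyEmbedding

variable {α : Type*} [DecidableEq α]

theorem List.Sublist.mem_and_sublist_drop_idxOf {c : α} {w L : List α} (h : (c :: w).Sublist L) :
    c ∈ L ∧ w.Sublist (L.drop (L.idxOf c + 1)) := by
  induction L generalizing w with
  | nil => simp at h
  | cons x L ih =>
    cases h with
    | cons _ h =>
      rcases eq_or_ne x c with rfl | hxc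
      · exact ⟨List.mem_cons_self, by
          simpa [List.idxOf_cons_self] using (List.sublist_cons_self x w).trans h⟩
      · obtain ⟨hc, hs⟩ := ih h
        refine ⟨List.mem_cons_of_mem _ hc, ?_⟩
        rw [List.idxOf_cons_ne _ (by simpa using hxc)]
        simpa using hs
    | cons_cons _ h => exact ⟨by simp, by simpa [List.idxOf_cons_self] using h⟩

variable [Fintype α]

def firstOccRank (L : List α) (c : α) : ℕ :=
  #{c' | L.idxOf c' < L.idxOf c}

theorem firstOccRank_le_idxOf {L : List α} {c : α} (hc : c ∈ L) :
    firstOccRank L c ≤ L.idxOf c := by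
  have hmem : ∀ c', L.idxOf c' < L.idxOf c → c' ∈ L := fun c' h =>
    List.idxOf_lt_length_iff.mp (h.trans (List.idxOf_lt_length_of_mem hc))
  simpa [firstOccRank] using card_le_card_of_injOn (t := range (L.idxOf c)) L.idxOf
    (fun c' h => by simpa using h)
    (fun a ha b _ hab => (List.idxOf_inj (hmem a (by simpa using ha))).mp hab)

theorem firstOccRank_lt_card (L : List α) (c : α) : firstOccRank L c < Fintype.card α :=
  card_lt_univ_of_notMem (x := c) (by simp)

theorem firstOccRank_lt_of_idxOf_lt {L : List α} {c d : α} (h : L.idxOf c < L.idxOf d) :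
    firstOccRank L c < firstOccRank L d :=
  card_lt_card <| ssubset_of_subset_of_ne
    (fun x hx => by simp only [mem_filter, mem_univ, true_and] at hx ⊢; omega)
    (fun heq => by simpa [h] using (Finset.ext_iff.mp heq c).mpr)

theorem eq_of_firstOccRank_eq {L : List α} {c d : α} (hc : c ∈ L)
    (h : firstOccRank L c = firstOccRank L d) : c = d := by
  rcases lt_trichotomy (L.idxOf c) (L.idxOf d) with hlt | heq | hgt
  · exact absurd h (firstOccRank_lt_of_idxOf_lt hlt).ne
  · exact (List.idxOf_inj hc).mp heq
  · exact absurd h (firstOccRank_lt_of_idxOf_lt hgt).ne'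

def greedyRanks : {n : ℕ} → List α → (Fin n → α) → Fin n → Fin (Fintype.card α)
  | 0, _, _ => Fin.elim0
  | _ + 1, L, w => Fin.cons ⟨firstOccRank L (w 0), firstOccRank_lt_card L (w 0)⟩
      (greedyRanks (L.drop (L.idxOf (w 0) + 1)) (Fin.tail w))

theorem sum_greedyRanks_le {n : ℕ} {L : List α} {w : Fin n → α} (h : (List.ofFn w).Sublist L) :
    ∑ i, ((greedyRanks L w i : ℕ) + 1) ≤ L.length := by
  induction n generalizing L with
  | zero => simp
  | succ n ih =>
    rw [List.ofFn_succ] at h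
    obtain ⟨hc, hs⟩ := h.mem_and_sublist_drop_idxOf
    have htail := ih (w := Fin.tail w) hs
    have hidx := List.idxOf_lt_length_of_mem hc
    have hrank := firstOccRank_le_idxOf hc
    simp only [greedyRanks, Fin.sum_univ_succ, Fin.cons_zero, Fin.cons_succ,
      List.length_drop] at htail ⊢
    omega

theorem eq_of_greedyRanks_eq {n : ℕ} {L : List α} {w₁ w₂ : Fin n → α}
    (h₁ : (List.ofFn w₁).Sublist L) (h₂ : (List.ofFn w₂).Sublist L)
    (h : greedyRanks L w₁ = greedyRanks L w₂) : w₁ = w₂ := by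
  induction n generalizing L with
  | zero => exact Subsingleton.elim _ _
  | succ n ih =>
    rw [List.ofFn_succ] at h₁ h₂
    obtain ⟨hc₁, hs₁⟩ := h₁.mem_and_sublist_drop_idxOf
    obtain ⟨-, hs₂⟩ := h₂.mem_and_sublist_drop_idxOf
    simp only [greedyRanks, Fin.cons_inj, Fin.mk.injEq] at h
    have hhead : w₁ 0 = w₂ 0 := eq_of_firstOccRank_eq hc₁ h.1
    rw [← hhead] at hs₂ h
    rw [← Fin.cons_self_tail w₁, ← Fin.cons_self_tail w₂, hhead,
      ih (w₁ := Fin.tail w₁) (w₂ := Fin.tail w₂) hs₁ hs₂ h.2]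

theorem card_sublist_le_card_sum_succ_le (n : ℕ) (L : List α) :
    #{w : Fin n → α | (List.ofFn w).Sublist L} ≤
      #{r : Fin n → Fin (Fintype.card α) | ∑ i, ((r i : ℕ) + 1) ≤ L.length} :=
  card_le_card_of_injOn (greedyRanks L)
    (fun w hw => by simpa using sum_greedyRanks_le (by simpa using hw))
    (fun w₁ h₁ w₂ h₂ h => eq_of_greedyRanks_eq (by simpa using h₁) (by simpa using h₂) h)

theorem card_sublist_le_exp_mul_pow (n : ℕ) (L : List α) {t : ℝ} (ht : 0 ≤ t) :
    (#{w : Fin n → α | (List.ofFn w).Sublist L} : ℝ) ≤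
      exp (t * L.length) * (∑ u ∈ range (Fintype.card α), exp (-t * (u + 1))) ^ n := by
  have hcast : #{r : Fin n → Fin (Fintype.card α) | ∑ i, ((r i : ℕ) + 1) ≤ L.length} =
      #{r : Fin n → Fin (Fintype.card α) | ∑ i, ((r i : ℝ) + 1) ≤ L.length} := by
    congr 1; ext r; simp only [mem_filter, mem_univ, true_and]; exact_mod_cast Iff.rfl
  calc (#{w : Fin n → α | (List.ofFn w).Sublist L} : ℝ)
      ≤ #{r : Fin n → Fin (Fintype.card α) | ∑ i, ((r i : ℕ) + 1) ≤ L.length} := by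
        exact_mod_cast card_sublist_le_card_sum_succ_le n L
    _ ≤ exp (t * L.length) * (∑ u : Fin (Fintype.card α), exp (-t * ((u : ℝ) + 1))) ^ n := by
        rw [hcast]
        simpa using card_filter_sum_le_le_exp_mul_pow (ι := Fin n) (fun u : Fin (Fintype.card α) =>
          (u : ℝ) + 1) L.length ht
    _ = exp (t * L.length) * (∑ u ∈ range (Fintype.card α), exp (-t * (u + 1))) ^ n := by
        rw [Fin.sum_univ_eq_sum_range (fun u : ℕ => exp (-t * (u + 1)))]

end GreedyEmbedding

theorem sum_range_four_exp_neg_mul_succ_le (t : ℝ) :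
    ∑ u ∈ range 4, exp (-t * ((u : ℝ) + 1)) ≤ 4 * exp (-(5 / 2) * t + 9 / 8 * t ^ 2) := by
  have hcosh : ∀ s, s ^ 2 ≤ (3 / 2 * t) ^ 2 → exp s + exp (-s) ≤ 2 * exp (9 / 8 * t ^ 2) := by
    intro s hs
    have h := (cosh_le_exp_half_sq s).trans (exp_le_exp.mpr (show s ^ 2 / 2 ≤ 9 / 8 * t ^ 2 by
      nlinarith))
    rw [cosh_eq] at h
    linarith
  have hsplit : ∑ u ∈ range 4, exp (-t * ((u : ℝ) + 1)) =
      exp (-(5 / 2) * t) * ((exp (3 / 2 * t) + exp (-(3 / 2 * t))) +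
        (exp (1 / 2 * t) + exp (-(1 / 2 * t)))) := by
    simp only [sum_range_succ, sum_range_zero, mul_add, ← exp_add]
    norm_num
    ring_nf
  rw [hsplit, exp_add]
  have h3 := hcosh (3 / 2 * t) le_rfl
  have h1 := hcosh (1 / 2 * t) (by nlinarith [sq_nonneg t])
  have := exp_pos (-(5 / 2) * t)
  nlinarith

theorem card_sublist_fin_four_le (n : ℕ) (L : List (Fin 4)) {t : ℝ} (ht : 0 ≤ t) :
    (#{w : Fin n → Fin 4 | (List.ofFn w).Sublist L} : ℝ) ≤
      4 ^ n * exp (t * L.length + n * (-(5 / 2) * t + 9 / 8 * t ^ 2)) := by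
  have hmgf := sum_range_four_exp_neg_mul_succ_le t
  calc (#{w : Fin n → Fin 4 | (List.ofFn w).Sublist L} : ℝ)
      ≤ exp (t * L.length) * (∑ u ∈ range 4, exp (-t * (u + 1))) ^ n := by
        simpa using card_sublist_le_exp_mul_pow n L ht
    _ ≤ exp (t * L.length) * (4 * exp (-(5 / 2) * t + 9 / 8 * t ^ 2)) ^ n := by gcongr
    _ = 4 ^ n * exp (t * L.length + n * (-(5 / 2) * t + 9 / 8 * t ^ 2)) := by
        rw [mul_pow, ← exp_nat_mul, exp_add]; ring

theorem card_exists_common_supersequence_le_pow {α : Type*} [DecidableEq α] [Fintype α]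
    [Inhabited α] (M n ℓ : ℕ) (B : ℝ)
    (hB : ∀ L : List α, L.length = ℓ → (#{w : Fin n → α | (List.ofFn w).Sublist L} : ℝ) ≤ B) :
    (#{F : Fin M → Fin n → α | ∃ L : List α, L.length ≤ ℓ ∧ ∀ i, (List.ofFn (F i)).Sublist L} : ℝ)
      ≤ Fintype.card α ^ ℓ * B ^ M := by
  have hcover : ({F : Fin M → Fin n → α | ∃ L : List α, L.length ≤ ℓ ∧
      ∀ i, (List.ofFn (F i)).Sublist L} : Finset _) ⊆ (univ : Finset (Fin ℓ → α)).biUnion fun v =>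
        Fintype.piFinset fun _ => {w : Fin n → α | (List.ofFn w).Sublist (List.ofFn v)} := by
    intro F hF
    obtain ⟨L, hL, hsub⟩ := (mem_filter.mp hF).2
    obtain ⟨v, hv⟩ : ∃ v : Fin ℓ → α, L.Sublist (List.ofFn v) := by
      obtain ⟨L', rfl, hL'⟩ : ∃ L' : List α, L'.length = ℓ ∧ L.Sublist L' :=
        ⟨L ++ List.replicate (ℓ - L.length) default, by simp; omega, List.sublist_append_left _ _⟩
      exact ⟨L'.get, by rwa [List.ofFn_get]⟩
    simp only [mem_biUnion, mem_univ, true_and, Fintype.mem_piFinset, mem_filter]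
    exact ⟨v, fun i => (hsub i).trans hv⟩
  calc (#{F : Fin M → Fin n → α | ∃ L : List α, L.length ≤ ℓ ∧
        ∀ i, (List.ofFn (F i)).Sublist L} : ℝ)
      ≤ ∑ v : Fin ℓ → α, (#{w : Fin n → α | (List.ofFn w).Sublist (List.ofFn v)} : ℝ) ^ M := by
        exact_mod_cast (card_le_card hcover).trans (card_biUnion_le.trans_eq (by simp))
    _ ≤ ∑ _v : Fin ℓ → α, B ^ M :=
        sum_le_sum fun v _ => pow_le_pow_left₀ (by positivity) (hB _ (List.length_ofFn)) M
    _ = Fintype.card α ^ ℓ * B ^ M := by simp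

-- `t = 4ε/9` minimises the drift `-ε t + 9t²/8`, which is then `-2ε²/9`.
theorem union_bound_exponent_le {n M ℓ ε : ℝ} (hε : 0 < ε) (hM : 21 / ε ^ 2 ≤ M) (hn : 0 ≤ n)
    (hℓ : ℓ ≤ (5 / 2 - ε) * n) :
    ℓ * log 4 + M * (4 * ε / 9 * ℓ + n * (-(5 / 2) * (4 * ε / 9) + 9 / 8 * (4 * ε / 9) ^ 2))
      ≤ -n := by
  have hdrift : 4 * ε / 9 * ℓ + n * (-(5 / 2) * (4 * ε / 9) + 9 / 8 * (4 * ε / 9) ^ 2)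
      ≤ -(2 / 9) * ε ^ 2 * n := by
    nlinarith [mul_le_mul_of_nonneg_left hℓ (by positivity : 0 ≤ 4 * ε / 9)]
  have hsamples : M * (-(2 / 9) * ε ^ 2 * n) ≤ -(14 / 3) * n := by
    have hneg : -(2 / 9) * ε ^ 2 * n ≤ 0 := by nlinarith [sq_nonneg ε]
    calc M * (-(2 / 9) * ε ^ 2 * n) ≤ 21 / ε ^ 2 * (-(2 / 9) * ε ^ 2 * n) :=
          mul_le_mul_of_nonpos_right hM hneg
      _ = -(14 / 3) * n := by field_simp; ring
  have hlog : ℓ * log 4 ≤ 5 / 2 * n * 1.39 := by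
    have hlog4 : log 4 ≤ 1.39 := by
      rw [show (4 : ℝ) = 2 ^ 2 by norm_num, log_pow]
      linarith [log_two_lt_d9]
    calc ℓ * log 4 ≤ 5 / 2 * n * log 4 :=
          mul_le_mul_of_nonneg_right (by nlinarith) (log_nonneg (by norm_num))
      _ ≤ 5 / 2 * n * 1.39 := mul_le_mul_of_nonneg_left hlog4 (by positivity)
  have hM0 : 0 ≤ M := le_trans (by positivity) hM
  nlinarith [mul_le_mul_of_nonneg_left hdrift hM0]

theorem card_exists_common_supersequence_fin_four_le (n M ℓ : ℕ) {ε : ℝ} (hε : 0 < ε)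
    (hM : 21 / ε ^ 2 ≤ (M : ℝ)) (hℓ : (ℓ : ℝ) ≤ (5 / 2 - ε) * n) :
    (#{F : Fin M → Fin n → Fin 4 | ∃ L : List (Fin 4), L.length ≤ ℓ ∧
        ∀ i, (List.ofFn (F i)).Sublist L} : ℝ) ≤ exp (-n) * ((4 : ℝ) ^ n) ^ M := by
  set t := 4 * ε / 9
  have hfit : ∀ L : List (Fin 4), L.length = ℓ →
      (#{w : Fin n → Fin 4 | (List.ofFn w).Sublist L} : ℝ) ≤
        4 ^ n * exp (t * ℓ + n * (-(5 / 2) * t + 9 / 8 * t ^ 2)) := by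
    rintro L rfl
    exact card_sublist_fin_four_le n L (by positivity)
  calc _ ≤ (4 : ℝ) ^ ℓ * (4 ^ n * exp (t * ℓ + n * (-(5 / 2) * t + 9 / 8 * t ^ 2))) ^ M := by
        simpa only [Fintype.card_fin, Nat.cast_ofNat] using
          card_exists_common_supersequence_le_pow M n ℓ _ hfit
    _ = exp (ℓ * log 4 + M * (t * ℓ + n * (-(5 / 2) * t + 9 / 8 * t ^ 2))) * ((4 : ℝ) ^ n) ^ M := by
        rw [exp_add (ℓ * log 4), exp_nat_mul, exp_nat_mul, exp_log four_pos, exp_add, exp_nat_mul]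
        ring
    _ ≤ exp (-n) * ((4 : ℝ) ^ n) ^ M := by
        gcongr; exact union_bound_exponent_le hε hM (Nat.cast_nonneg n) hℓ

/-- If ε > 0 and M ≥ 21/ε², then with probability at least 1 - e^{-n} over M
i.i.d. uniform strands in {A,C,G,T}^n, every common supersequence of the strands
has length at least (2.5 - ε)n. -/
theorem stmt7 (n M : ℕ) (ε : ℝ) (hε : 0 < ε) (hM : 21 / ε ^ 2 ≤ (M : ℝ)) :
    (1 - Real.exp (-(n : ℝ))) * (Fintype.card (Fin M → Fin n → Fin 4)) ≤
      ((Finset.univ.filter (fun F : Fin M → Fin n → Fin 4 =>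
        ∀ L : List (Fin 4), (∀ i, (List.ofFn (F i)).Sublist L) →
          (2.5 - ε) * n ≤ (L.length : ℝ))).card : ℝ) := by
  set good : (Fin M → Fin n → Fin 4) → Prop := fun F => ∀ L : List (Fin 4),
    (∀ i, (List.ofFn (F i)).Sublist L) → (2.5 - ε) * n ≤ (L.length : ℝ)
  have hbad : (#{F | ¬ good F} : ℝ) ≤ Real.exp (-n) * ((4 : ℝ) ^ n) ^ M := by
    rcases le_or_gt ((5 / 2 - ε) * n) 0 with hdeg | hpos
    · have hempty : #{F | ¬ good F} = 0 := by
        refine card_eq_zero.mpr (filter_eq_empty_iff.mpr fun F _ hF => hF fun L _ => ?_)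
        norm_num
        linarith [L.length.cast_nonneg (α := ℝ)]
      rw [hempty, Nat.cast_zero]
      positivity
    refine le_trans ?_
      (card_exists_common_supersequence_fin_four_le n M _ hε hM (Nat.floor_le hpos.le))
    refine Nat.cast_le.mpr (card_le_card fun F hF => ?_)
    simp only [good, mem_filter, mem_univ, true_and, not_forall, not_le] at hF ⊢
    obtain ⟨L, hsub, hshort⟩ := hF
    exact ⟨L, Nat.le_floor (by norm_num at hshort; exact hshort.le), hsub⟩
  have hsplit := card_filter_add_card_filter_not (s := univ) good
  have htotal : (Fintype.card (Fin M → Fin n → Fin 4) : ℝ) = ((4 : ℝ) ^ n) ^ M := by simp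
  rw [card_univ, ← Nat.cast_inj (R := ℝ), Nat.cast_add, htotal] at hsplit
  rw [htotal]
  exact (by linarith : (1 - Real.exp (-n)) * ((4 : ℝ) ^ n) ^ M ≤ #(filter good univ))
end

section
/- Fix ε > 0 and let M ≥ 9/ε². Let S be a set of M i.i.d. random strings in {A,C,G,T}^n each drawn uniformly from strings with no two consecutive equal characters. Then with probability at least 1 − exp(−n), the length of every common supersequence of all strings in S is at least (2 − ε)n. -/
/-
A strand `c :: s` embeds in `L` iff `s` embeds in the part of `L` after the first occurrence of
`c`. The admissible first letters (at most three once the previous letter is fixed) first occur at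
distinct positions of `L`, so weighting by `r ^ L.length` with `r = exp (-ε)` gives, by induction,
`#{strands of length n in L} * r ^ L.length ≤ (4 / 3) * (r * (1 + r + r ^ 2)) ^ n`. As
`1 + e^{-ε} + e^{-2ε} ≤ 3 e^{ε²/2 - ε}` (from `cosh x ≤ exp (x² / 2)`), a fixed `L` of length at
most `(2 - ε) n` contains at most a fraction `e^{-ε² n / 2}` of the `4 · 3^{n-1}` strands, so
all `M` strands embed in it with probability at most `e^{-ε² n M / 2} ≤ e^{-9n/2}`. A union
bound over the fewer than `16^n` lists of length `< 2n` leaves `(16 e^{-9/2})^n ≤ e^{-n}`.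
-/

open Finset
open scoped Classical

theorem Finset.sum_pow_le_sum_range_card {r : ℝ} (hr0 : 0 ≤ r) (hr1 : r ≤ 1) (S : Finset ℕ) :
    ∑ i ∈ S, r ^ i ≤ ∑ i ∈ range #S, r ^ i := by
  refine Finset.induction_on_max S (by simp) fun a S hlt ih => ?_
  have haS : a ∉ S := fun h => lt_irrefl a (hlt a h)
  have hcard : #S ≤ a := by
    simpa using card_le_card (fun x hx => mem_range.2 (hlt x hx) : S ⊆ range a)
  rw [sum_insert haS, card_insert_of_notMem haS, sum_range_succ, add_comm]
  exact add_le_add ih (pow_le_pow_of_le_one hr0 hr1 hcard)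

theorem List.sublist_drop_idxOf_succ {α : Type*} [BEq α] [LawfulBEq α] {c : α} {s L : List α}
    (h : (c :: s).Sublist L) : s.Sublist (L.drop (L.idxOf c + 1)) := by
  obtain ⟨r₁, r₂, rfl, hc, hs⟩ := List.cons_sublist_iff.1 h
  rw [List.idxOf_append_of_mem hc,
    List.drop_append_of_le_length (List.idxOf_lt_length_iff.2 hc)]
  exact hs.trans (List.sublist_append_right _ _)

theorem sum_pow_idxOf_le_sum_range_card {α : Type*} [DecidableEq α] {r : ℝ} (hr0 : 0 ≤ r)
    (hr1 : r ≤ 1) (T : Finset α) (L : List α) :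
    ∑ c ∈ T.filter (· ∈ L), r ^ L.idxOf c ≤ ∑ i ∈ range #T, r ^ i := by
  have hinj : Set.InjOn L.idxOf (T.filter (· ∈ L)) := fun c hc d _ h =>
    (List.idxOf_inj (mem_filter.1 hc).2).1 h
  calc ∑ c ∈ T.filter (· ∈ L), r ^ L.idxOf c
      = ∑ i ∈ (T.filter (· ∈ L)).image L.idxOf, r ^ i := (sum_image hinj).symm
    _ ≤ ∑ i ∈ range #((T.filter (· ∈ L)).image L.idxOf), r ^ i :=
        sum_pow_le_sum_range_card hr0 hr1 _
    _ ≤ ∑ i ∈ range #T, r ^ i := by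
        refine sum_le_sum_of_subset_of_nonneg (range_subset_range.2 ?_)
          fun i _ _ => pow_nonneg hr0 i
        exact card_image_le.trans (card_filter_le _ _)

section NoRepeat

variable {α : Type*} [Fintype α] [DecidableEq α]

noncomputable def noRepeatAfter (p : α) (n : ℕ) : Finset (Fin n → α) :=
  univ.filter fun v => List.IsChain (· ≠ ·) (p :: List.ofFn v)

theorem isChain_ofFn_succ_iff_s8 {n : ℕ} {v : Fin (n + 1) → α} :
    List.IsChain (· ≠ ·) (List.ofFn v) ↔ Fin.tail v ∈ noRepeatAfter (v 0) n := by
  simp only [noRepeatAfter, mem_filter, mem_univ, true_and, List.ofFn_succ]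
  rfl

theorem pow_card_sub_one_le_card_noRepeatAfter (p : α) (n : ℕ) :
    (Fintype.card α - 1) ^ n ≤ #(noRepeatAfter p n) := by
  induction n generalizing p with
  | zero => simp [noRepeatAfter]
  | succ n ih =>
    calc (Fintype.card α - 1) ^ (n + 1)
        = ∑ _c ∈ univ.erase p, (Fintype.card α - 1) ^ n := by
          rw [sum_const, card_erase_of_mem (mem_univ p), card_univ, smul_eq_mul, pow_succ']
      _ ≤ ∑ c ∈ univ.erase p, #(noRepeatAfter c n) := sum_le_sum fun c _ => ih c
      _ = #((univ.erase p).sigma fun c => noRepeatAfter c n) := (card_sigma _ _).symm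
      _ ≤ #(noRepeatAfter p (n + 1)) := by
          refine card_le_card_of_injOn (fun x => Fin.cons x.1 x.2) (fun x hx => ?_) ?_
          · obtain ⟨hp, hx⟩ := mem_sigma.1 hx
            simp only [noRepeatAfter, mem_coe, mem_filter, mem_univ, true_and] at hx ⊢
            rw [List.ofFn_succ, List.isChain_cons_cons]
            exact ⟨Ne.symm (ne_of_mem_erase hp), by simpa [List.ofFn_succ] using hx⟩
          · rintro ⟨c, v⟩ - ⟨d, w⟩ - h
            obtain ⟨rfl, rfl⟩ := Fin.cons_inj.1 h
            rfl

theorem card_le_sum_card_sublist_drop_idxOf {n : ℕ} (T : Finset α) (L : List α)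
    (s : Finset (Fin (n + 1) → α))
    (hs : ∀ v ∈ s, v 0 ∈ T ∧ List.IsChain (· ≠ ·) (List.ofFn v) ∧ (List.ofFn v).Sublist L) :
    #s ≤ ∑ c ∈ T.filter (· ∈ L),
      #((noRepeatAfter c n).filter fun v => (List.ofFn v).Sublist (L.drop (L.idxOf c + 1))) := by
  rw [← card_sigma]
  refine card_le_card_of_injOn (fun v => ⟨v 0, Fin.tail v⟩) (fun v hv => ?_) ?_
  · obtain ⟨hT, hchain, hsub⟩ := hs v hv
    rw [List.ofFn_succ] at hsub
    simp only [mem_coe, mem_sigma, mem_filter]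
    exact ⟨⟨hT, hsub.subset List.mem_cons_self⟩, isChain_ofFn_succ_iff_s8.1 hchain,
      List.sublist_drop_idxOf_succ hsub⟩
  · intro v _ w _ h
    simp only [Sigma.mk.injEq] at h
    rw [← Fin.cons_self_tail v, ← Fin.cons_self_tail w, h.1, eq_of_heq h.2]

theorem card_mul_pow_length_le_of_heads {r X : ℝ} (hr0 : 0 ≤ r) (hr1 : r ≤ 1) (hX : 0 ≤ X)
    {n : ℕ} (ih : ∀ (c : α) (L : List α),
      (#((noRepeatAfter c n).filter fun v => (List.ofFn v).Sublist L) : ℝ) * r ^ L.length ≤ X)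
    (T : Finset α) (L : List α) (s : Finset (Fin (n + 1) → α))
    (hs : ∀ v ∈ s, v 0 ∈ T ∧ List.IsChain (· ≠ ·) (List.ofFn v) ∧ (List.ofFn v).Sublist L) :
    (#s : ℝ) * r ^ L.length ≤ r * X * ∑ i ∈ range #T, r ^ i := by
  set rest : α → List α := fun c => L.drop (L.idxOf c + 1)
  set sub : α → Finset (Fin n → α) := fun c =>
    (noRepeatAfter c n).filter fun v => (List.ofFn v).Sublist (rest c)
  have hpow : ∀ c ∈ T.filter (· ∈ L),
      r ^ L.length = r ^ (L.idxOf c + 1) * r ^ (rest c).length := by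
    intro c hc
    have := List.idxOf_lt_length_iff.2 (mem_filter.1 hc).2
    rw [← pow_add, List.length_drop]
    congr 1
    omega
  calc (#s : ℝ) * r ^ L.length ≤ ∑ c ∈ T.filter (· ∈ L), (#(sub c) : ℝ) * r ^ L.length := by
        rw [← sum_mul]
        exact mul_le_mul_of_nonneg_right
          (by exact_mod_cast card_le_sum_card_sublist_drop_idxOf T L s hs) (pow_nonneg hr0 _)
    _ = ∑ c ∈ T.filter (· ∈ L), r ^ (L.idxOf c + 1) * ((#(sub c) : ℝ) * r ^ (rest c).length) :=
        sum_congr rfl fun c hc => by rw [hpow c hc]; ring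
    _ ≤ ∑ c ∈ T.filter (· ∈ L), r ^ (L.idxOf c + 1) * X :=
        sum_le_sum fun c _ => mul_le_mul_of_nonneg_left (ih c _) (pow_nonneg hr0 _)
    _ = r * X * ∑ c ∈ T.filter (· ∈ L), r ^ L.idxOf c := by
        rw [mul_sum]
        exact sum_congr rfl fun c _ => by ring
    _ ≤ r * X * ∑ i ∈ range #T, r ^ i :=
        mul_le_mul_of_nonneg_left (sum_pow_idxOf_le_sum_range_card hr0 hr1 T L)
          (mul_nonneg hr0 hX)

theorem card_noRepeatAfter_sublist_mul_pow_le {r : ℝ} (hr0 : 0 ≤ r) (hr1 : r ≤ 1) (n : ℕ)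
    (p : α) (L : List α) :
    (#((noRepeatAfter p n).filter fun v => (List.ofFn v).Sublist L) : ℝ) * r ^ L.length ≤
      (r * ∑ i ∈ range (Fintype.card α - 1), r ^ i) ^ n := by
  induction n generalizing p L with
  | zero =>
    rw [pow_zero]
    exact mul_le_one₀ (by exact_mod_cast card_le_one_of_subsingleton _) (pow_nonneg hr0 _)
      (pow_le_one₀ hr0 hr1)
  | succ n ih =>
    have hB : 0 ≤ r * ∑ i ∈ range (Fintype.card α - 1), r ^ i :=
      mul_nonneg hr0 (sum_nonneg fun i _ => pow_nonneg hr0 i)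
    have := card_mul_pow_length_le_of_heads hr0 hr1 (pow_nonneg hB n) ih (univ.erase p) L
      ((noRepeatAfter p (n + 1)).filter fun v => (List.ofFn v).Sublist L) fun v hv => ?_
    · rw [card_erase_of_mem (mem_univ p), card_univ] at this
      linarith [pow_succ (r * ∑ i ∈ range (Fintype.card α - 1), r ^ i) n]
    · obtain ⟨hchain, hsub⟩ := mem_filter.1 hv
      simp only [noRepeatAfter, mem_filter, mem_univ, true_and] at hchain
      rw [List.ofFn_succ, List.isChain_cons_cons, ← List.ofFn_succ] at hchain
      exact ⟨mem_erase.2 ⟨Ne.symm hchain.1, mem_univ _⟩, hchain.2, hsub⟩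

end NoRepeat

theorem four_mul_three_pow_le_card_noHomo (n : ℕ) : 4 * 3 ^ n ≤ Fintype.card (NoHomo (n + 1)) :=
  calc 4 * 3 ^ n = ∑ _c : Fin 4, (Fintype.card (Fin 4) - 1) ^ n := by simp
    _ ≤ ∑ c, #(noRepeatAfter c n) :=
        sum_le_sum fun c _ => pow_card_sub_one_le_card_noRepeatAfter c n
    _ = #(univ.sigma fun c => noRepeatAfter c n) := (card_sigma _ _).symm
    _ ≤ #(univ.image (Subtype.val : NoHomo (n + 1) → Fin (n + 1) → Fin 4)) := by
        refine card_le_card_of_injOn (fun x => Fin.cons x.1 x.2) (fun x hx => ?_) ?_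
        · have hx : Fin.tail (Fin.cons x.1 x.2 : Fin (n + 1) → Fin 4) ∈
              noRepeatAfter ((Fin.cons x.1 x.2 : Fin (n + 1) → Fin 4) 0) n := (mem_sigma.1 hx).2
          exact mem_image.2 ⟨⟨_, isChain_ofFn_succ_iff_s8.2 hx⟩, mem_univ _, rfl⟩
        · rintro ⟨c, v⟩ - ⟨d, w⟩ - h
          obtain ⟨rfl, rfl⟩ := Fin.cons_inj.1 h
          rfl
    _ ≤ Fintype.card (NoHomo (n + 1)) := card_image_le.trans_eq card_univ

theorem card_sublist_noHomo_mul_pow_le {r : ℝ} (hr0 : 0 ≤ r) (hr1 : r ≤ 1) (n : ℕ)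
    (L : List (Fin 4)) :
    (#(univ.filter fun S : NoHomo (n + 1) => (List.ofFn S.1).Sublist L) : ℝ) * r ^ L.length ≤
      r * (r * ∑ i ∈ range 3, r ^ i) ^ n * ∑ i ∈ range 4, r ^ i := by
  have ih (c : Fin 4) (L : List (Fin 4)) :
      (#((noRepeatAfter c n).filter fun v => (List.ofFn v).Sublist L) : ℝ) * r ^ L.length ≤
        (r * ∑ i ∈ range 3, r ^ i) ^ n := by
    have := card_noRepeatAfter_sublist_mul_pow_le hr0 hr1 n c L
    rwa [Fintype.card_fin] at this
  have hX : 0 ≤ (r * ∑ i ∈ range 3, r ^ i) ^ n :=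
    pow_nonneg (mul_nonneg hr0 (sum_nonneg fun i _ => pow_nonneg hr0 i)) n
  have hval : Function.Injective fun S : NoHomo (n + 1) => S.1 := Subtype.val_injective
  rw [← card_image_of_injective _ hval]
  have := card_mul_pow_length_le_of_heads hr0 hr1 hX ih univ L
    ((univ.filter fun S : NoHomo (n + 1) => (List.ofFn S.1).Sublist L).image fun S => S.1)
    fun v hv => by
    obtain ⟨S, hS, rfl⟩ := mem_image.1 hv
    exact ⟨mem_univ _, S.2, (mem_filter.1 hS).2⟩
  rwa [card_univ, Fintype.card_fin] at this

open Real

theorem sum_range_three_exp_neg_pow_le (ε : ℝ) :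
    ∑ i ∈ range 3, exp (-ε) ^ i ≤ 3 * exp (ε ^ 2 / 2 - ε) := by
  have hcosh := cosh_le_exp_half_sq ε
  rw [cosh_eq] at hcosh
  have h1 : 1 ≤ exp (ε ^ 2 / 2) := one_le_exp (by positivity)
  have hsum : ∑ i ∈ range 3, exp (-ε) ^ i = exp (-ε) * (exp ε + 1 + exp (-ε)) := by
    simp only [sum_range_succ, range_zero, sum_empty]
    rw [mul_add, mul_add, ← exp_add]
    simp only [pow_zero, zero_add, pow_one, neg_add_cancel, exp_zero, mul_one, add_right_inj]
    ring
  rw [hsum, sub_eq_add_neg, exp_add, mul_comm (exp _) (exp (-ε)), ← mul_assoc, mul_comm 3,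
    mul_assoc]
  exact mul_le_mul_of_nonneg_left (by linarith) (exp_pos _).le

theorem sum_range_four_pow_le {r : ℝ} (hr0 : 0 ≤ r) (hr1 : r ≤ 1) :
    ∑ i ∈ range 4, r ^ i ≤ 4 / 3 * ∑ i ∈ range 3, r ^ i := by
  have h2 : r ^ 2 ≤ r := by nlinarith
  have h3 : r ^ 3 ≤ r ^ 2 := by nlinarith
  simp only [sum_range_succ, range_zero, sum_empty]
  linarith

theorem card_sublist_noHomo_le {ε : ℝ} (hε : 0 ≤ ε) (n : ℕ) (L : List (Fin 4))
    (hL : (L.length : ℝ) ≤ (2 - ε) * (n + 1)) :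
    (#(univ.filter fun S : NoHomo (n + 1) => (List.ofFn S.1).Sublist L) : ℝ) ≤
      exp (-(ε ^ 2 / 2) * (n + 1)) * Fintype.card (NoHomo (n + 1)) := by
  set r := exp (-ε)
  have hr0 : 0 ≤ r := (exp_pos _).le
  have hr1 : r ≤ 1 := exp_le_one_iff.2 (by linarith)
  have hB : r * ∑ i ∈ range 3, r ^ i ≤ 3 * exp (ε ^ 2 / 2 - 2 * ε) := by
    calc r * ∑ i ∈ range 3, r ^ i ≤ r * (3 * exp (ε ^ 2 / 2 - ε)) :=
          mul_le_mul_of_nonneg_left (sum_range_three_exp_neg_pow_le ε) hr0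
      _ = 3 * exp (ε ^ 2 / 2 - 2 * ε) := by
          rw [mul_left_comm, ← exp_add]; ring_nf
  have hweighted : r * (r * ∑ i ∈ range 3, r ^ i) ^ n * ∑ i ∈ range 4, r ^ i ≤
      4 * 3 ^ n * exp ((ε ^ 2 / 2 - 2 * ε) * (n + 1)) := by
    have hB0 : 0 ≤ r * ∑ i ∈ range 3, r ^ i :=
      mul_nonneg hr0 (sum_nonneg fun i _ => pow_nonneg hr0 i)
    calc r * (r * ∑ i ∈ range 3, r ^ i) ^ n * ∑ i ∈ range 4, r ^ i
        ≤ r * (r * ∑ i ∈ range 3, r ^ i) ^ n * (4 / 3 * ∑ i ∈ range 3, r ^ i) :=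
          mul_le_mul_of_nonneg_left (sum_range_four_pow_le hr0 hr1) (by positivity)
      _ = 4 / 3 * (r * ∑ i ∈ range 3, r ^ i) ^ (n + 1) := by ring
      _ ≤ 4 / 3 * (3 * exp (ε ^ 2 / 2 - 2 * ε)) ^ (n + 1) := by gcongr
      _ = 4 * 3 ^ n * exp ((ε ^ 2 / 2 - 2 * ε) * (n + 1)) := by
          rw [mul_pow, ← exp_nat_mul]; push_cast; ring_nf
  have hrL : r ^ L.length * exp (ε * L.length) = 1 := by
    rw [← exp_nat_mul, ← exp_add, ← exp_zero]
    ring_nf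
  calc (#(univ.filter fun S : NoHomo (n + 1) => (List.ofFn S.1).Sublist L) : ℝ)
      = #(univ.filter fun S : NoHomo (n + 1) => (List.ofFn S.1).Sublist L) * r ^ L.length *
          exp (ε * L.length) := by rw [mul_assoc, hrL, mul_one]
    _ ≤ 4 * 3 ^ n * exp ((ε ^ 2 / 2 - 2 * ε) * (n + 1)) * exp (ε * L.length) :=
        mul_le_mul_of_nonneg_right
          ((card_sublist_noHomo_mul_pow_le hr0 hr1 n L).trans hweighted) (exp_pos _).le
    _ ≤ 4 * 3 ^ n * exp (-(ε ^ 2 / 2) * (n + 1)) := by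
        rw [mul_assoc, ← exp_add]
        gcongr
        nlinarith [mul_le_mul_of_nonneg_left hL hε]
    _ ≤ exp (-(ε ^ 2 / 2) * (n + 1)) * Fintype.card (NoHomo (n + 1)) := by
        rw [mul_comm]
        gcongr
        exact_mod_cast four_mul_three_pow_le_card_noHomo n

noncomputable def listsOfLengthLT (α : Type*) [Fintype α] (K : ℕ) : Finset (List α) :=
  (range K).biUnion fun ℓ => univ.image (List.ofFn : (Fin ℓ → α) → List α)

theorem mem_listsOfLengthLT {α : Type*} [Fintype α] {K : ℕ} {L : List α} :
    L ∈ listsOfLengthLT α K ↔ L.length < K := by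
  simp only [listsOfLengthLT, mem_biUnion, mem_range, mem_image, mem_univ, true_and]
  constructor
  · rintro ⟨ℓ, hℓ, v, rfl⟩
    simpa using hℓ
  · exact fun h => ⟨L.length, h, L.get, List.ofFn_get L⟩

theorem card_listsOfLengthLT_le {α : Type*} [Fintype α] (hα : 2 ≤ Fintype.card α) (K : ℕ) :
    #(listsOfLengthLT α K) ≤ Fintype.card α ^ K :=
  calc #(listsOfLengthLT α K) ≤ ∑ ℓ ∈ range K, #(univ.image (List.ofFn : (Fin ℓ → α) → List α)) :=
        card_biUnion_le
    _ ≤ ∑ ℓ ∈ range K, Fintype.card α ^ ℓ :=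
        sum_le_sum fun ℓ _ => card_image_le.trans_eq (by simp)
    _ ≤ Fintype.card α ^ K := (Nat.geomSum_lt hα fun _ => mem_range.1).le

theorem sixteen_mul_exp_neg_nine_halves_le : 16 * exp (-(9 / 2)) ≤ exp (-1) := by
  have h : (16 : ℝ) ≤ exp (7 / 2) :=
    calc (16 : ℝ) ≤ (1 / 2 + 1) ^ 7 := by norm_num
      _ ≤ exp (1 / 2) ^ 7 := by gcongr; exact add_one_le_exp _
      _ = exp (7 / 2) := by rw [← exp_nat_mul]; norm_num
  calc 16 * exp (-(9 / 2)) ≤ exp (7 / 2) * exp (-(9 / 2)) := by gcongr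
    _ = exp (-1) := by rw [← exp_add]; norm_num

theorem card_piFinset_sublist_noHomo_le {n M : ℕ} {ε : ℝ} (hε : 0 ≤ ε) (hM : 9 ≤ ε ^ 2 * M)
    {L : List (Fin 4)} (hL : (L.length : ℝ) ≤ (2 - ε) * (n + 1)) :
    (#(Fintype.piFinset fun _ : Fin M =>
        univ.filter fun S : NoHomo (n + 1) => (List.ofFn S.1).Sublist L) : ℝ) ≤
      exp (-(9 / 2)) ^ (n + 1) * Fintype.card (Fin M → NoHomo (n + 1)) := by
  rw [Fintype.card_piFinset, prod_const, card_univ, Fintype.card_fun, Fintype.card_fin]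
  push_cast
  calc (#(univ.filter fun S : NoHomo (n + 1) => (List.ofFn S.1).Sublist L) : ℝ) ^ M
      ≤ (exp (-(ε ^ 2 / 2) * (n + 1)) * Fintype.card (NoHomo (n + 1))) ^ M := by
        gcongr
        exact card_sublist_noHomo_le hε n L hL
    _ = exp (-(ε ^ 2 * M / 2) * (n + 1)) * Fintype.card (NoHomo (n + 1)) ^ M := by
        rw [mul_pow, ← exp_nat_mul]
        ring_nf
    _ ≤ exp (-(9 / 2)) ^ (n + 1) * Fintype.card (NoHomo (n + 1)) ^ M := by
        rw [← exp_nat_mul]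
        refine mul_le_mul_of_nonneg_right (exp_le_exp.2 ?_) (by positivity)
        push_cast
        nlinarith

theorem card_filter_exists_short_supersequence_le (n M : ℕ) {ε : ℝ} (hε : 0 ≤ ε)
    (hM : 9 ≤ ε ^ 2 * M) :
    (#(univ.filter fun F : Fin M → NoHomo (n + 1) => ∃ L : List (Fin 4),
        (∀ i, (List.ofFn (F i).1).Sublist L) ∧ (L.length : ℝ) < (2 - ε) * (n + 1)) : ℝ) ≤
      exp (-(n + 1)) * Fintype.card (Fin M → NoHomo (n + 1)) := by
  set total := (Fintype.card (Fin M → NoHomo (n + 1)) : ℝ)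
  set short := (listsOfLengthLT (Fin 4) (2 * (n + 1))).filter
    fun L => (L.length : ℝ) ≤ (2 - ε) * (n + 1)
  set supersequenceOf : List (Fin 4) → Finset (Fin M → NoHomo (n + 1)) := fun L =>
    Fintype.piFinset fun _ => univ.filter fun S => (List.ofFn S.1).Sublist L
  have hcover : (univ.filter fun F : Fin M → NoHomo (n + 1) => ∃ L : List (Fin 4),
      (∀ i, (List.ofFn (F i).1).Sublist L) ∧ (L.length : ℝ) < (2 - ε) * (n + 1)) ⊆
        short.biUnion supersequenceOf := by
    intro F hF
    obtain ⟨L, hsub, hlen⟩ := (mem_filter.1 hF).2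
    have hlen2 : L.length < 2 * (n + 1) := by
      have : (L.length : ℝ) < 2 * (n + 1) := by nlinarith
      exact_mod_cast this
    exact mem_biUnion.2 ⟨L, mem_filter.2 ⟨mem_listsOfLengthLT.2 hlen2, hlen.le⟩,
      Fintype.mem_piFinset.2 fun i => mem_filter.2 ⟨mem_univ _, hsub i⟩⟩
  have hshort : (#short : ℝ) ≤ 16 ^ (n + 1) :=
    calc (#short : ℝ) ≤ #(listsOfLengthLT (Fin 4) (2 * (n + 1))) := by
          exact_mod_cast card_filter_le _ _
      _ ≤ 4 ^ (2 * (n + 1)) := by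
          exact_mod_cast (card_listsOfLengthLT_le (by simp) _).trans_eq (by simp)
      _ = 16 ^ (n + 1) := by rw [pow_mul]; norm_num
  calc _ ≤ (#(short.biUnion supersequenceOf) : ℝ) := by exact_mod_cast card_le_card hcover
    _ ≤ ∑ L ∈ short, (#(supersequenceOf L) : ℝ) := by exact_mod_cast card_biUnion_le
    _ ≤ #short * (exp (-(9 / 2)) ^ (n + 1) * total) := by
        rw [← nsmul_eq_mul, ← sum_const]
        exact sum_le_sum fun L hL => card_piFinset_sublist_noHomo_le hε hM (mem_filter.1 hL).2
    _ ≤ (16 * exp (-(9 / 2))) ^ (n + 1) * total := by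
        rw [mul_pow, mul_assoc]
        gcongr
    _ ≤ exp (-1) ^ (n + 1) * total := by
        gcongr
        exact sixteen_mul_exp_neg_nine_halves_le
    _ = exp (-(n + 1)) * total := by
        rw [← exp_nat_mul]
        push_cast
        ring_nf

/-- If ε > 0 and M ≥ 9/ε², then with probability at least 1 - e^{-n} over M
i.i.d. strands drawn uniformly from length-n strands with no homopolymers,
every common supersequence has length at least (2 - ε)n. -/
theorem stmt8 (n M : ℕ) (ε : ℝ) (hε : 0 < ε) (hM : 9 / ε ^ 2 ≤ (M : ℝ)) :
    (1 - Real.exp (-(n : ℝ))) * (Fintype.card (Fin M → NoHomo n)) ≤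
      ((Finset.univ.filter (fun F : Fin M → NoHomo n =>
        ∀ L : List (Fin 4), (∀ i, (List.ofFn (F i).1).Sublist L) →
          (2 - ε) * n ≤ (L.length : ℝ))).card : ℝ) := by
  rcases n with _ | n
  · simp
  have hbad := card_filter_exists_short_supersequence_le n M hε.le
    (by rwa [div_le_iff₀ (by positivity), mul_comm] at hM)
  have hsplit := card_filter_add_card_filter_not (s := univ) fun F : Fin M → NoHomo (n + 1) =>
    ∀ L : List (Fin 4), (∀ i, (List.ofFn (F i).1).Sublist L) →
      (2 - ε) * ((n + 1 : ℕ) : ℝ) ≤ L.length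
  simp only [not_forall, not_le, exists_prop, Nat.cast_add, Nat.cast_one, card_univ] at hsplit
  have htotal := congrArg (Nat.cast : ℕ → ℝ) hsplit
  push_cast at htotal ⊢
  rw [← htotal] at hbad ⊢
  linarith
end

section
/- Let M satisfy 5e^45 · n ≤ M ≤ 5n·exp(4n/25), and let S be a set of M i.i.d. uniformly random strings in {A,C,G,T}^n. Then with probability at least 1 − exp(−n), the shortest common supersequence of S has length at least 2.5n + (1/5)·√(n·log(M/(5n))). -/
open Finset
open scoped Classical

/-!
Embed a word `x ∈ Σⁿ` greedily into a supersequence `L` and record, for each letter, the number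
`rᵢ ∈ {0, 1, 2, 3}` of distinct letters skipped before it. This code is injective and satisfies
`n + ∑ rᵢ ≤ |L|`, so a fixed `L` of length `T` contains at most
`K = #{r ∈ {0,…,3}ⁿ | n + ∑ r ≤ T}` words, and a union bound over the at most `(T + 1) 4^T`
candidates `L` gives `P(scs ≤ T) ≤ (T + 1) 4^T (K / 4ⁿ)^M`.

Writing `r = a + 2b` with `a, b ∈ {0,1}ⁿ`, at least a fraction
`½ (d + 1) C(n, ⌈n/2⌉ + 2d) / 2ⁿ ≳ (d + 1) e^{-24d²/n} / √n` of the `r` have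
`∑ r ≥ 3⌈n/2⌉ + 2d`. For `Λ = log (M / 5n)`, `T = ⌊2.5n + √(nΛ)/5⌋` and `d ≈ √(nΛ)/10` this
fraction is at least `e^{-Λ} = 5n / M`, so `(K / 4ⁿ)^M ≤ (1 - 5n/M)^M ≤ e^{-5n}`, which beats
`(T + 1) 4^T ≤ e^{4n}`.
-/

open Real

namespace List

variable {α : Type*} [DecidableEq α]

theorem Sublist.drop_idxOf_succ {c : α} {s L : List α} (h : (c :: s).Sublist L) :
    s.Sublist (L.drop (L.idxOf c + 1)) := by
  induction L with
  | nil => simp at h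
  | cons d L ih =>
    by_cases hd : d = c
    · subst hd
      simpa using h.of_cons_cons
    · rw [idxOf_cons_ne _ hd]
      exact ih (h.of_cons_of_ne (Ne.symm hd))

def firstRank (L : List α) (c : α) : ℕ := (L.take (L.idxOf c)).toFinset.card

theorem firstRank_le_idxOf (L : List α) (c : α) : L.firstRank c ≤ L.idxOf c :=
  (toFinset_card_le _).trans (length_take_le _ _)

theorem firstRank_lt_card [Fintype α] (L : List α) (c : α) :
    L.firstRank c < Fintype.card α := by
  have hc : c ∉ L.take (L.idxOf c) := by
    by_cases hcL : c ∈ L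
    · simp [mem_take_iff_idxOf_lt hcL]
    · exact fun h => hcL (mem_of_mem_take h)
  calc L.firstRank c ≤ (univ.erase c).card :=
        card_le_card fun x hx => mem_erase.2
          ⟨by rintro rfl; exact hc (mem_toFinset.1 hx), mem_univ x⟩
    _ < Fintype.card α := card_erase_lt_of_mem (mem_univ c)

theorem firstRank_lt_firstRank {L : List α} {a b : α} (ha : a ∈ L)
    (hab : L.idxOf a < L.idxOf b) : L.firstRank a < L.firstRank b := by
  have hsub : insert a (L.take (L.idxOf a)).toFinset ⊆ (L.take (L.idxOf b)).toFinset := by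
    intro x hx
    rcases Finset.mem_insert.1 hx with rfl | hx
    · simpa [mem_take_iff_idxOf_lt ha] using hab
    · simp only [mem_toFinset] at hx ⊢
      exact (take_prefix_take_left hab.le).subset hx
  have ha' : a ∉ (L.take (L.idxOf a)).toFinset := by
    simp [mem_take_iff_idxOf_lt ha]
  simpa [firstRank, card_insert_of_notMem ha'] using card_le_card hsub

theorem eq_of_firstRank_eq {L : List α} {a b : α} (ha : a ∈ L) (hb : b ∈ L)
    (h : L.firstRank a = L.firstRank b) : a = b := by
  rw [← idxOf_inj ha]
  rcases lt_trichotomy (L.idxOf a) (L.idxOf b) with hab | hab | hab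
  · exact absurd h (firstRank_lt_firstRank ha hab).ne
  · exact hab
  · exact absurd h (firstRank_lt_firstRank hb hab).ne'

variable [Fintype α]

def rankCode (L : List α) : (n : ℕ) → (Fin n → α) → Fin n → Fin (Fintype.card α)
  | 0, _ => Fin.elim0
  | n + 1, x => Fin.cons ⟨L.firstRank (x 0), L.firstRank_lt_card (x 0)⟩
      (rankCode (L.drop (L.idxOf (x 0) + 1)) n (Fin.tail x))

theorem add_sum_rankCode_le {n : ℕ} {L : List α} {x : Fin n → α} (h : (ofFn x).Sublist L) :
    n + ∑ i, (L.rankCode n x i : ℕ) ≤ L.length := by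
  induction n generalizing L with
  | zero => simp
  | succ n ih =>
    rw [ofFn_succ] at h
    have hlt : L.idxOf (x 0) < L.length := idxOf_lt_length_iff.2 (h.subset mem_cons_self)
    have htail := ih (x := Fin.tail x) h.drop_idxOf_succ
    have hrank := L.firstRank_le_idxOf (x 0)
    rw [length_drop] at htail
    simp only [rankCode, Fin.sum_univ_succ, Fin.cons_zero, Fin.cons_succ]
    omega

theorem rankCode_injective {n : ℕ} {L : List α} {x y : Fin n → α} (hx : (ofFn x).Sublist L)
    (hy : (ofFn y).Sublist L) (h : L.rankCode n x = L.rankCode n y) : x = y := by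
  induction n generalizing L with
  | zero => exact funext fun i => i.elim0
  | succ n ih =>
    rw [ofFn_succ] at hx hy
    simp only [rankCode, Fin.cons_inj, Fin.mk.injEq] at h
    have h0 : x 0 = y 0 :=
      eq_of_firstRank_eq (hx.subset mem_cons_self) (hy.subset mem_cons_self) h.1
    rw [← Fin.cons_self_tail x, ← Fin.cons_self_tail y, h0]
    rw [h0] at h hx
    exact congrArg _
      (ih (x := Fin.tail x) (y := Fin.tail y) hx.drop_idxOf_succ hy.drop_idxOf_succ h.2)

theorem card_ofFn_sublist_le (n : ℕ) (L : List α) :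
    #{x : Fin n → α | (ofFn x).Sublist L} ≤
      #{r : Fin n → Fin (Fintype.card α) | n + ∑ i, (r i : ℕ) ≤ L.length} :=
  card_le_card_of_injOn (L.rankCode n)
    (fun _ hx => by simpa using add_sum_rankCode_le (by simpa using hx))
    (fun _ hx _ hy h => rankCode_injective (by simpa using hx) (by simpa using hy) h)

end List

theorem exists_supersequence_length_eq_scsLen {M : ℕ} (G : Fin M → List (Fin 4)) :
    ∃ L : List (Fin 4), L.length = scsLen G ∧ ∀ i, (G i).Sublist L :=
  Nat.sInf_mem (s := {m | ∃ L : List (Fin 4), L.length = m ∧ ∀ i, (G i).Sublist L})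
    ⟨_, ((List.finRange M).map G).flatten, rfl, fun i =>
      List.sublist_flatten_of_mem (List.mem_map_of_mem (List.mem_finRange i))⟩

theorem card_scsLen_le_le (M n T K : ℕ) (hK : ∀ L : List (Fin 4), L.length ≤ T →
      #{x : Fin n → Fin 4 | (List.ofFn x).Sublist L} ≤ K) :
    #{F : Fin M → Fin n → Fin 4 | scsLen (fun i => List.ofFn (F i)) ≤ T} ≤
      (T + 1) * (4 ^ T * K ^ M) := by
  have hsub : (univ.filter fun F : Fin M → Fin n → Fin 4 =>
      scsLen (fun i => List.ofFn (F i)) ≤ T) ⊆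
      (range (T + 1)).biUnion fun m => (univ : Finset (Fin m → Fin 4)).biUnion fun L =>
        Fintype.piFinset fun _ : Fin M =>
          {x : Fin n → Fin 4 | (List.ofFn x).Sublist (List.ofFn L)} := by
    intro F hF
    obtain ⟨L, hlen, hL⟩ := exists_supersequence_length_eq_scsLen fun i => List.ofFn (F i)
    simp only [mem_filter, mem_univ, true_and] at hF
    simp only [mem_biUnion, mem_range, mem_univ, true_and, Fintype.mem_piFinset, mem_filter]
    exact ⟨L.length, by omega, L.get, by simpa using hL⟩
  calc _ ≤ _ := card_le_card hsub
    _ ≤ ∑ m ∈ range (T + 1), ∑ L : Fin m → Fin 4, K ^ M := by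
      refine card_biUnion_le.trans (sum_le_sum fun m hm => card_biUnion_le.trans
        (sum_le_sum fun L _ => ?_))
      rw [Fintype.card_piFinset_const]
      exact Nat.pow_le_pow_left (hK _ (by simpa [Nat.lt_succ_iff] using hm)) M
    _ ≤ ∑ m ∈ range (T + 1), 4 ^ T * K ^ M := by
      refine sum_le_sum fun m hm => ?_
      rw [sum_const, card_univ, Fintype.card_fun, Fintype.card_fin, Fintype.card_fin, smul_eq_mul]
      exact Nat.mul_le_mul_right _
        (Nat.pow_le_pow_right (by norm_num) (by simpa [Nat.lt_succ_iff] using hm))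
    _ = _ := by rw [sum_const, card_range, smul_eq_mul]

theorem card_scsLen_le_le_of_card_lt (M n T : ℕ) {δ : ℝ}
    (hδ : δ * 4 ^ n ≤ #{r : Fin n → Fin 4 | T < n + ∑ i, (r i : ℕ)}) :
    (#{F : Fin M → Fin n → Fin 4 | scsLen (fun i => List.ofFn (F i)) ≤ T} : ℝ) ≤
      (T + 1) * (4 ^ T * ((1 - δ) * 4 ^ n) ^ M) := by
  set K := #{r : Fin n → Fin 4 | n + ∑ i, (r i : ℕ) ≤ T}
  have hK : ∀ L : List (Fin 4), L.length ≤ T →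
      #{x : Fin n → Fin 4 | (List.ofFn x).Sublist L} ≤ K := by
    intro L hL
    have h := List.card_ofFn_sublist_le n L
    rw [Fintype.card_fin] at h
    refine h.trans (card_le_card fun r hr => ?_)
    simp only [mem_filter, mem_univ, true_and] at hr ⊢
    exact hr.trans hL
  have hsplit : (K : ℝ) + #{r : Fin n → Fin 4 | T < n + ∑ i, (r i : ℕ)} = 4 ^ n := by
    have := card_filter_add_card_filter_not (s := (univ : Finset (Fin n → Fin 4)))
      (p := fun r => n + ∑ i, (r i : ℕ) ≤ T)
    simp only [not_le, card_univ, Fintype.card_fun, Fintype.card_fin] at this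
    exact_mod_cast this
  calc _ ≤ (((T + 1) * (4 ^ T * K ^ M) : ℕ) : ℝ) := by
        exact_mod_cast card_scsLen_le_le M n T K hK
    _ ≤ _ := by push_cast; gcongr; linarith

/-- The square of `4 ^ k ≤ 2 √k C(2k, k)`, so that the induction stays in `ℕ`. -/
theorem Nat.four_pow_sq_le_four_mul_centralBinom_sq {k : ℕ} (hk : 0 < k) :
    (4 ^ k) ^ 2 ≤ 4 * k * k.centralBinom ^ 2 := by
  induction k, hk using Nat.le_induction with
  | base => decide
  | succ k hk ih =>
    have hrec := Nat.succ_mul_centralBinom_succ k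
    refine Nat.le_of_mul_le_mul_left ?_ (Nat.succ_pos k)
    calc (k + 1) * (4 ^ (k + 1)) ^ 2 = 16 * (k + 1) * (4 ^ k) ^ 2 := by ring
      _ ≤ 16 * (k + 1) * (4 * k * k.centralBinom ^ 2) := Nat.mul_le_mul_left _ ih
      _ = 16 * (4 * k * (k + 1)) * k.centralBinom ^ 2 := by ring
      _ ≤ 16 * (2 * k + 1) ^ 2 * k.centralBinom ^ 2 := by gcongr; nlinarith
      _ = (k + 1) * (4 * (k + 1) * (k + 1).centralBinom ^ 2) := by
        rw [show (k + 1) * (4 * (k + 1) * (k + 1).centralBinom ^ 2) =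
          4 * ((k + 1) * (k + 1).centralBinom) ^ 2 by ring, hrec]
        ring

theorem Nat.four_pow_le_four_mul_choose_half_sq {n : ℕ} (hn : 0 < n) :
    4 ^ n ≤ 4 * n * n.choose ((n + 1) / 2) ^ 2 := by
  obtain ⟨k, rfl | rfl⟩ := Nat.even_or_odd' n
  · have h := Nat.four_pow_sq_le_four_mul_centralBinom_sq (show 0 < k by omega)
    rw [Nat.centralBinom_eq_two_mul_choose] at h
    rw [show (2 * k + 1) / 2 = k by omega]
    calc 4 ^ (2 * k) = (4 ^ k) ^ 2 := by ring
      _ ≤ 4 * k * (2 * k).choose k ^ 2 := h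
      _ ≤ 4 * (2 * k) * (2 * k).choose k ^ 2 := by gcongr; omega
  · have h := Nat.four_pow_sq_le_four_mul_centralBinom_sq (Nat.succ_pos k)
    have hpascal : (k + 1).centralBinom = 2 * (2 * k + 1).choose (k + 1) := by
      rw [Nat.centralBinom_eq_two_mul_choose, show 2 * (k + 1) = 2 * k + 1 + 1 by ring,
        Nat.choose_succ_succ',
        Nat.choose_symm_of_eq_add (show 2 * k + 1 = k + (k + 1) by ring)]
      ring
    rw [show (2 * k + 1 + 1) / 2 = k + 1 by omega]
    refine Nat.le_of_mul_le_mul_left ?_ (show 0 < 4 by norm_num)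
    calc 4 * 4 ^ (2 * k + 1) = (4 ^ (k + 1)) ^ 2 := by ring
      _ ≤ 4 * (k + 1) * (2 * (2 * k + 1).choose (k + 1)) ^ 2 := hpascal ▸ h
      _ ≤ 4 * (4 * (2 * k + 1) * (2 * k + 1).choose (k + 1) ^ 2) := by
        ring_nf; gcongr; omega

theorem Nat.two_pow_div_le_choose_half {n : ℕ} (hn : 0 < n) :
    (2 : ℝ) ^ n / (2 * √n) ≤ n.choose ((n + 1) / 2) := by
  have h : ((2 : ℝ) ^ n) ^ 2 ≤ (2 * √n * n.choose ((n + 1) / 2)) ^ 2 := by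
    rw [mul_pow, mul_pow, sq_sqrt (Nat.cast_nonneg n), ← pow_mul, mul_comm n 2, pow_mul]
    exact_mod_cast (by norm_num : 4 = 2 ^ 2) ▸ Nat.four_pow_le_four_mul_choose_half_sq hn
  rw [div_le_iff₀ (by positivity), mul_comm]
  exact (pow_le_pow_iff_left₀ (by positivity) (by positivity) two_ne_zero).1 h

theorem pow_mul_le_of_mul_le_succ {f : ℕ → ℝ} {ρ : ℝ} (hρ : 0 ≤ ρ) {a j : ℕ}
    (hf : ∀ k, a ≤ k → k < a + j → ρ * f k ≤ f (k + 1)) : ρ ^ j * f a ≤ f (a + j) := by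
  induction j with
  | zero => simp
  | succ j ih =>
    calc ρ ^ (j + 1) * f a = ρ * (ρ ^ j * f a) := by ring
      _ ≤ ρ * f (a + j) :=
        mul_le_mul_of_nonneg_left (ih fun k hk hkj => hf k hk (by omega)) hρ
      _ ≤ f (a + (j + 1)) := hf _ (by omega) (by omega)

theorem Nat.mul_choose_le_choose_succ {n k : ℕ} {ρ : ℝ} (h : ρ * (k + 1) ≤ n - k) :
    ρ * n.choose k ≤ n.choose (k + 1) := by
  rcases le_or_gt k n with hkn | hkn
  · have hrec : (n.choose (k + 1) : ℝ) * (k + 1) = n.choose k * (n - k) := by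
      rw [← Nat.cast_sub hkn]; exact_mod_cast Nat.choose_succ_right_eq n k
    refine le_of_mul_le_mul_right ?_ (by positivity : (0 : ℝ) < k + 1)
    rw [hrec, mul_right_comm, mul_comm]
    exact mul_le_mul_of_nonneg_left h (Nat.cast_nonneg _)
  · simp [Nat.choose_eq_zero_of_lt hkn]

theorem Nat.pow_mul_choose_half_le_choose {n d j : ℕ} (hn : 0 < n) (hd : 4 * d ≤ n)
    (hj : j ≤ 2 * d) :
    (((n : ℝ) - 4 * d) / (n + 4 * d)) ^ j * n.choose ((n + 1) / 2) ≤
      n.choose ((n + 1) / 2 + j) := by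
  have hdR : (4 * d : ℝ) ≤ n := by exact_mod_cast hd
  have hnR : (0 : ℝ) < n := by exact_mod_cast hn
  set ρ := ((n : ℝ) - 4 * d) / (n + 4 * d)
  have hρ : ρ * ((n + 1) / 2 + 2 * d) ≤ (n + 1) / 2 - 2 * d := by
    rw [div_mul_eq_mul_div, div_le_iff₀ (by positivity)]
    nlinarith [(Nat.cast_nonneg d : (0 : ℝ) ≤ d)]
  refine pow_mul_le_of_mul_le_succ (f := fun k => (n.choose k : ℝ))
    (div_nonneg (by linarith) (by positivity)) fun k hk hkj => Nat.mul_choose_le_choose_succ ?_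
  have hk' : (2 * k + 1 : ℝ) ≤ n + 4 * d := by
    exact_mod_cast (by omega : 2 * k + 1 ≤ n + 4 * d)
  calc ρ * (k + 1) ≤ ρ * ((n + 1) / 2 + 2 * d) :=
        mul_le_mul_of_nonneg_left (by linarith) (div_nonneg (by linarith) (by positivity))
    _ ≤ (n + 1) / 2 - 2 * d := hρ
    _ ≤ n - k := by linarith

theorem Real.exp_neg_le_sub_div_add {x y : ℝ} (hy : 0 ≤ y) (hyx : 12 * y ≤ x) (hx : 0 < x) :
    exp (-(12 * y / x)) ≤ (x - 4 * y) / (x + 4 * y) := by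
  calc exp (-(12 * y / x)) ≤ (1 + 12 * y / x)⁻¹ := by
        rw [exp_neg]
        exact inv_anti₀ (by positivity) (by linarith [add_one_le_exp (12 * y / x)])
    _ = x / (x + 12 * y) := by field_simp
    _ ≤ (x - 4 * y) / (x + 4 * y) := by
        rw [div_le_div_iff₀ (by positivity) (by positivity)]; nlinarith

theorem card_mul_card_le_card_digit_sum_ge (n p m : ℕ) :
    #{A : Finset (Fin n) | p ≤ #A} * #{B : Finset (Fin n) | m ≤ #B} ≤
      #{r : Fin n → Fin 4 | p + 2 * m ≤ ∑ i, (r i : ℕ)} := by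
  let digit (A B : Finset (Fin n)) (i : Fin n) : Fin 4 :=
    ⟨(if i ∈ A then 1 else 0) + 2 * (if i ∈ B then 1 else 0), by split_ifs <;> omega⟩
  have hsum : ∀ A B, ∑ i, (digit A B i : ℕ) = #A + 2 * #B := by
    intro A B
    simp only [digit, sum_add_distrib, ← mul_sum, sum_boole, Nat.cast_id, filter_mem_eq_inter,
      univ_inter]
  rw [← card_product]
  refine card_le_card_of_injOn (fun AB => digit AB.1 AB.2) (fun AB hAB => ?_)
    (fun AB _ AB' _ h => ?_)
  · simp only [coe_product, Set.mem_prod, mem_coe, mem_filter, mem_univ, true_and] at hAB ⊢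
    rw [hsum]
    omega
  · have hi : ∀ i, (i ∈ AB.1 ↔ i ∈ AB'.1) ∧ (i ∈ AB.2 ↔ i ∈ AB'.2) := fun i => by
      have := congrArg (fun r => (r i : ℕ)) h
      simp only [digit] at this
      split_ifs at this <;> simp_all
    exact Prod.ext (ext fun i => (hi i).1) (ext fun i => (hi i).2)

theorem two_pow_le_two_mul_card_half_le_card (n : ℕ) :
    2 ^ n ≤ 2 * #{A : Finset (Fin n) | (n + 1) / 2 ≤ #A} := by
  have hcompl : #{A : Finset (Fin n) | ¬(n + 1) / 2 ≤ #A} ≤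
      #{A : Finset (Fin n) | (n + 1) / 2 ≤ #A} :=
    card_le_card_of_injOn compl (fun A hA => by
      simp only [coe_filter, Set.mem_ofPred_eq, mem_univ, true_and, card_compl,
        Fintype.card_fin] at hA ⊢
      omega) compl_injective.injOn
  have htotal := card_filter_add_card_filter_not (s := (univ : Finset (Finset (Fin n))))
    (p := fun A => (n + 1) / 2 ≤ #A)
  rw [card_univ, Fintype.card_finset, Fintype.card_fin] at htotal
  omega

theorem card_filter_le_card_eq_sum_choose (n p : ℕ) :
    #{B : Finset (Fin n) | p ≤ #B} = ∑ k ∈ Icc p n, n.choose k := by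
  rw [card_eq_sum_card_fiberwise (f := card) (t := Icc p n) fun B hB =>
    mem_Icc.2 ⟨(mem_filter.1 hB).2, (card_le_univ B).trans_eq (Fintype.card_fin n)⟩]
  refine sum_congr rfl fun k hk => ?_
  have hchoose := card_powersetCard k (univ : Finset (Fin n))
  rw [card_univ, Fintype.card_fin, powersetCard_eq_filter, powerset_univ] at hchoose
  rw [← hchoose, filter_filter]
  exact congrArg card
    (filter_congr fun B _ => ⟨fun h => h.2, fun h => ⟨h ▸ (mem_Icc.1 hk).1, h⟩⟩)

theorem succ_mul_pow_mul_choose_half_le_card {n d : ℕ} (hn : 0 < n) (hd : 4 * d ≤ n) :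
    (d + 1) * ((((n : ℝ) - 4 * d) / (n + 4 * d)) ^ (2 * d) * n.choose ((n + 1) / 2)) ≤
      #{B : Finset (Fin n) | (n + 1) / 2 + d ≤ #B} := by
  set h := (n + 1) / 2
  set ρ := ((n : ℝ) - 4 * d) / (n + 4 * d)
  have hdR : (4 * d : ℝ) ≤ n := by exact_mod_cast hd
  have hρ0 : 0 ≤ ρ := div_nonneg (by linarith) (by positivity)
  have hρ1 : ρ ≤ 1 := (div_le_one (by positivity)).2 (by linarith)
  rw [card_filter_le_card_eq_sum_choose]
  calc (d + 1) * (ρ ^ (2 * d) * n.choose h)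
      = ∑ _k ∈ Icc (h + d) (h + 2 * d), ρ ^ (2 * d) * n.choose h := by
        rw [sum_const, Nat.card_Icc, nsmul_eq_mul, show h + 2 * d + 1 - (h + d) = d + 1 by omega]
        push_cast; ring
    _ ≤ ∑ k ∈ Icc (h + d) (h + 2 * d), (n.choose k : ℝ) := by
        refine sum_le_sum fun k hk => ?_
        obtain ⟨hk1, hk2⟩ := mem_Icc.1 hk
        obtain ⟨j, rfl⟩ := Nat.exists_eq_add_of_le (le_trans (Nat.le_add_right h d) hk1)
        calc ρ ^ (2 * d) * n.choose h ≤ ρ ^ j * n.choose h :=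
              mul_le_mul_of_nonneg_right (pow_le_pow_of_le_one hρ0 hρ1 (by omega))
                (by positivity)
          _ ≤ _ := Nat.pow_mul_choose_half_le_choose hn hd (by omega)
    _ ≤ ∑ k ∈ Icc (h + d) n, (n.choose k : ℝ) :=
        sum_le_sum_of_subset_of_nonneg (Icc_subset_Icc le_rfl (by omega))
          fun _ _ _ => by positivity
    _ = _ := by push_cast; rfl

theorem exp_neg_le_pow_sub_div_add {n d : ℕ} (hn : 0 < n) (hd : 12 * d ≤ n) :
    exp (-(24 * d ^ 2 / n)) ≤ (((n : ℝ) - 4 * d) / (n + 4 * d)) ^ (2 * d) := by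
  calc exp (-(24 * d ^ 2 / n)) = exp (-(12 * d / n)) ^ (2 * d) := by
        rw [← exp_nat_mul]; push_cast; ring_nf
    _ ≤ _ := pow_le_pow_left₀ (exp_pos _).le (exp_neg_le_sub_div_add (Nat.cast_nonneg d)
        (by exact_mod_cast hd) (by exact_mod_cast hn)) _

theorem four_pow_mul_le_card_digit_sum_ge {n d : ℕ} (hn : 0 < n) (hd : 12 * d ≤ n) :
    4 ^ n * ((d + 1) / (4 * √n) * exp (-(24 * d ^ 2 / n))) ≤
      #{r : Fin n → Fin 4 | 3 * ((n + 1) / 2) + 2 * d ≤ ∑ i, (r i : ℕ)} := by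
  set h := (n + 1) / 2
  have hA : (2 : ℝ) ^ n / 2 ≤ #{A : Finset (Fin n) | h ≤ #A} := by
    rw [div_le_iff₀ two_pos, mul_comm]
    exact_mod_cast two_pow_le_two_mul_card_half_le_card n
  have hB : (d + 1) * (exp (-(24 * d ^ 2 / n)) * (2 ^ n / (2 * √n))) ≤
      #{B : Finset (Fin n) | h + d ≤ #B} := by
    have hρ := exp_neg_le_pow_sub_div_add hn hd
    exact (succ_mul_pow_mul_choose_half_le_card hn (by omega)).trans' <| mul_le_mul_of_nonneg_left
      (mul_le_mul hρ (Nat.two_pow_div_le_choose_half hn) (by positivity)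
        ((exp_pos _).le.trans hρ)) (by positivity)
  have hprod := card_mul_card_le_card_digit_sum_ge n h (h + d)
  rw [show h + 2 * (h + d) = 3 * h + 2 * d by ring] at hprod
  calc 4 ^ n * ((d + 1) / (4 * √n) * exp (-(24 * d ^ 2 / n)))
      = 2 ^ n / 2 * ((d + 1) * (exp (-(24 * d ^ 2 / n)) * (2 ^ n / (2 * √n)))) := by
        rw [show (4 : ℝ) ^ n = 2 ^ n * 2 ^ n by rw [← mul_pow]; norm_num]; ring
    _ ≤ #{A : Finset (Fin n) | h ≤ #A} * #{B : Finset (Fin n) | h + d ≤ #B} := by gcongr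
    _ ≤ _ := by exact_mod_cast hprod

theorem succ_mul_four_pow_mul_one_sub_pow_le {n M T : ℕ} {δ : ℝ} (hn : 30 ≤ n) (hδ : δ ≤ 1)
    (hδM : δ * M = 5 * n) (hT : (T : ℝ) ≤ 2.58 * n) :
    (T + 1) * 4 ^ T * (1 - δ) ^ M ≤ exp (-n) := by
  have hnR : (30 : ℝ) ≤ n := by exact_mod_cast hn
  have hT1 : (T : ℝ) + 1 ≤ exp (0.4 * n) := by
    nlinarith [quadratic_le_exp_of_nonneg (x := 0.4 * n) (by positivity)]
  have hT4 : (4 : ℝ) ^ T ≤ exp (1.39 * T) := by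
    have h4 : (4 : ℝ) ≤ exp 1.39 := by
      rw [← log_le_iff_le_exp (by norm_num), show (4 : ℝ) = 2 ^ 2 by norm_num, log_pow]
      linarith [log_two_lt_d9]
    calc (4 : ℝ) ^ T ≤ exp 1.39 ^ T := pow_le_pow_left₀ (by norm_num) h4 T
      _ = exp (1.39 * T) := by rw [← exp_nat_mul, mul_comm]
  have hM : (1 - δ) ^ M ≤ exp (-(5 * n)) := by
    calc (1 - δ) ^ M ≤ exp (-δ) ^ M := pow_le_pow_left₀ (by linarith) (one_sub_le_exp_neg δ) M
      _ = exp (-(5 * n)) := by rw [← exp_nat_mul, ← hδM]; ring_nf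
  calc (T + 1) * 4 ^ T * (1 - δ) ^ M ≤ exp (0.4 * n) * exp (1.39 * T) * exp (-(5 * n)) := by
        gcongr
    _ = exp (0.4 * n + 1.39 * T - 5 * n) := by rw [← exp_add, ← exp_add]; ring_nf
    _ ≤ exp (-n) := exp_le_exp.2 (by nlinarith)

section Parameters

variable {n : ℕ} {Λ : ℝ}

theorem sqrt_mul_le_two_mul_div_five (hΛn : Λ ≤ 4 * n / 25) : √(n * Λ) ≤ 2 * n / 5 := by
  rw [sqrt_le_left (by positivity)]
  nlinarith [(Nat.cast_nonneg n : (0 : ℝ) ≤ n)]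

theorem exp_neg_le_mul_exp_neg_sq {d : ℕ} (hΛ : 45 ≤ Λ) (hΛn : Λ ≤ 4 * n / 25)
    (hd₀ : √(n * Λ) ≤ 10 * d) (hd : d ≤ √(n * Λ) / 10 + 3 / 2) :
    exp (-Λ) ≤ (d + 1) / (4 * √n) * exp (-(24 * d ^ 2 / n)) := by
  have hn : (1125 / 4 : ℝ) ≤ n := by linarith
  have hS := sqrt_mul_le_two_mul_div_five hΛn
  have hS2 : √(n * Λ) ^ 2 = n * Λ := sq_sqrt (by positivity)
  have h40 : exp (-4) ≤ (d + 1) / (4 * √n) := by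
    have hsn : √n ≤ √(n * Λ) := sqrt_le_sqrt (by nlinarith)
    have he : 40 ≤ exp 4 := by
      calc (40 : ℝ) ≤ 2.7182818283 ^ 4 := by norm_num
        _ ≤ exp 1 ^ 4 := by gcongr; exact exp_one_gt_d9.le
        _ = exp 4 := by rw [← exp_nat_mul]; norm_num
    rw [exp_neg, le_div_iff₀ (by positivity)]
    calc (exp 4)⁻¹ * (4 * √n) ≤ 40⁻¹ * (4 * √n) := by gcongr
      _ ≤ d + 1 := by linarith
  have hquad : 24 * (d : ℝ) ^ 2 / n + 4 ≤ Λ := by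
    rw [div_add' _ _ _ (by linarith), div_le_iff₀ (by linarith)]
    nlinarith [mul_le_mul hd hd (Nat.cast_nonneg d) (by positivity)]
  calc exp (-Λ) ≤ exp (-4) * exp (-(24 * d ^ 2 / n)) := by
        rw [← exp_add]; exact exp_le_exp.2 (by linarith)
    _ ≤ _ := by gcongr

theorem exp_neg_mul_four_pow_le_card_floor_lt (hΛ : 45 ≤ Λ) (hΛn : Λ ≤ 4 * n / 25) :
    exp (-Λ) * 4 ^ n ≤
      #{r : Fin n → Fin 4 | ⌊2.5 * n + 1 / 5 * √(n * Λ)⌋₊ < n + ∑ i, (r i : ℕ)} := by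
  have hn : 0 < n := by exact_mod_cast (by linarith : (0 : ℝ) < n)
  set d := ⌈√(n * Λ) / 10 + 1 / 2⌉₊
  have hS := sqrt_mul_le_two_mul_div_five hΛn
  have hd₀ : √(n * Λ) / 10 + 1 / 2 ≤ d := Nat.le_ceil _
  have hd : (d : ℝ) ≤ √(n * Λ) / 10 + 3 / 2 := by
    linarith [Nat.ceil_lt_add_one (by positivity : 0 ≤ √(n * Λ) / 10 + 1 / 2)]
  have hd12 : 12 * d ≤ n := by exact_mod_cast (by linarith : (12 * d : ℝ) ≤ n)
  have hTd : ⌊2.5 * n + 1 / 5 * √(n * Λ)⌋₊ < n + 3 * ((n + 1) / 2) + 2 * d := by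
    have : (n : ℝ) ≤ 2 * ((n + 1) / 2 : ℕ) := by exact_mod_cast (by omega : n ≤ 2 * ((n + 1) / 2))
    exact (Nat.floor_lt (by positivity)).2 (by push_cast; linarith)
  calc exp (-Λ) * 4 ^ n ≤ 4 ^ n * ((d + 1) / (4 * √n) * exp (-(24 * d ^ 2 / n))) := by
        rw [mul_comm]; gcongr; exact exp_neg_le_mul_exp_neg_sq hΛ hΛn (by linarith) hd
    _ ≤ #{r : Fin n → Fin 4 | 3 * ((n + 1) / 2) + 2 * d ≤ ∑ i, (r i : ℕ)} :=
        four_pow_mul_le_card_digit_sum_ge hn hd12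
    _ ≤ _ := by
        refine Nat.cast_le.2 (card_le_card fun r hr => ?_)
        simp only [mem_filter, mem_univ, true_and] at hr ⊢
        omega

end Parameters

theorem log_div_bounds {n M : ℕ} (hn : 0 < n) (hM : (0 : ℝ) < M)
    (hM1 : 5 * exp 45 * n ≤ (M : ℝ)) (hM2 : (M : ℝ) ≤ 5 * n * exp (4 * n / 25)) :
    45 ≤ log (M / (5 * n)) ∧ log (M / (5 * n)) ≤ 4 * n / 25 := by
  have h5n : (0 : ℝ) < 5 * n := by positivity
  constructor
  · rw [le_log_iff_exp_le (by positivity), le_div_iff₀ h5n]; linarith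
  · rw [log_le_iff_le_exp (by positivity), div_le_iff₀ h5n]; linarith

theorem one_sub_mul_card_le_card_filter {α : Type*} [Fintype α] {p q : α → Prop}
    [DecidablePred p] [DecidablePred q] (hpq : ∀ a, ¬p a → q a) {ε : ℝ}
    (hq : (#{a | q a} : ℝ) ≤ ε * Fintype.card α) :
    (1 - ε) * Fintype.card α ≤ #{a | p a} := by
  have hsplit := card_filter_add_card_filter_not (s := (univ : Finset α)) (p := p)
  have hnot : #{a | ¬p a} ≤ #{a | q a} :=
    card_le_card fun a ha => by simp only [mem_filter, mem_univ, true_and] at ha ⊢; exact hpq a ha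
  rw [card_univ] at hsplit
  have : (#{a | p a} : ℝ) + #{a | ¬p a} = Fintype.card α := by exact_mod_cast hsplit
  have : (#{a | ¬p a} : ℝ) ≤ #{a | q a} := by exact_mod_cast hnot
  linarith

/-- If 5e^45·n ≤ M ≤ 5n·e^{4n/25}, then with probability at least 1 - e^{-n}
over M i.i.d. uniform strands in {A,C,G,T}^n, the shortest common
supersequence has length at least 2.5n + (1/5)√(n log(M/(5n))). -/
theorem stmt9 (n M : ℕ) (hM1 : 5 * Real.exp 45 * n ≤ (M : ℝ))
    (hM2 : (M : ℝ) ≤ 5 * n * Real.exp (4 * n / 25)) :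
    (1 - Real.exp (-(n : ℝ))) * (Fintype.card (Fin M → Fin n → Fin 4)) ≤
      ((Finset.univ.filter (fun F : Fin M → Fin n → Fin 4 =>
        2.5 * n + (1 / 5) * Real.sqrt (n * Real.log ((M : ℝ) / (5 * n)))
          ≤ (scsLen (fun i => List.ofFn (F i)) : ℝ))).card : ℝ) := by
  obtain rfl | hn := n.eq_zero_or_pos
  · simp
  have hM : (0 : ℝ) < M := (by positivity : (0 : ℝ) < 5 * exp 45 * n).trans_le hM1
  obtain ⟨hΛ, hΛn⟩ := log_div_bounds hn hM hM1 hM2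
  have hδM : exp (-log (M / (5 * n))) * M = 5 * n := by
    rw [exp_neg, exp_log (by positivity)]; field_simp
  have htail := exp_neg_mul_four_pow_le_card_floor_lt hΛ hΛn
  set Λ := log (M / (5 * n))
  set T := ⌊2.5 * n + 1 / 5 * √(n * Λ)⌋₊
  have hT : (T : ℝ) ≤ 2.58 * n :=
    (Nat.floor_le (by positivity)).trans (by linarith [sqrt_mul_le_two_mul_div_five hΛn])
  refine one_sub_mul_card_le_card_filter (q := fun F => scsLen (fun i => List.ofFn (F i)) ≤ T)
    (fun F hF => ?_) ?_
  · exact Nat.le_floor (not_le.1 hF).le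
  clear_value T Λ
  have hn30 : 30 ≤ n := by exact_mod_cast (by linarith : (30 : ℝ) ≤ n)
  calc _ ≤ (T + 1) * (4 ^ T * ((1 - exp (-Λ)) * 4 ^ n) ^ M) :=
        card_scsLen_le_le_of_card_lt M n T htail
    _ = (T + 1) * 4 ^ T * (1 - exp (-Λ)) ^ M * (4 ^ n) ^ M := by rw [mul_pow]; ring
    _ ≤ exp (-n) * (4 ^ n) ^ M := by
        gcongr
        exact succ_mul_four_pow_mul_one_sub_pow_le hn30 (exp_le_one_iff.2 (by linarith)) hδM hT
    _ = _ := by simp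
end

section
/- Let ℓ ≥ 2 be an integer and let Y_1,...,Y_n be i.i.d. uniform on {1,2,...,ℓ}. For every λ with 0 < λ ≤ ℓn/50, one has P( Σ_{i=1}^n (Y_i − E[Y_i]) ≥ λ ) ≥ (exp(12.5λ²/(ℓ²n)) − 1)² · exp(−400λ²/(ℓ²n)). -/
open Finset
open scoped Classical

lemma aux_cosh_bound (v : ℝ) (hv : |v| ≤ 1) :
    |Real.exp v + Real.exp (-v) - (2 + v^2)| ≤ v^4 * (5/48) := by
  have h1 := Real.exp_bound hv (n := 4) (by norm_num)
  have h2 := Real.exp_bound (x := -v) (by simpa using hv) (n := 4) (by norm_num)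
  have e1 : ∑ m ∈ range 4, v ^ m / m.factorial = 1 + v + v^2/2 + v^3/6 := by
    norm_num [Finset.sum_range_succ, Nat.factorial]
  have e2 : ∑ m ∈ range 4, (-v) ^ m / m.factorial = 1 - v + v^2/2 - v^3/6 := by
    norm_num [Finset.sum_range_succ, Nat.factorial]
    ring
  rw [e1] at h1; rw [e2] at h2
  have hva : |v|^4 = v^4 := by
    rw [← abs_pow]; exact abs_of_nonneg (by positivity)
  have hvb : |(-v)|^4 = v^4 := by rw [abs_neg]; exact hva
  rw [hva] at h1; rw [hvb] at h2
  norm_num [Nat.factorial] at h1 h2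
  have n1 := abs_sub_le_iff.1 h1
  have n2 := abs_sub_le_iff.1 h2
  rw [abs_sub_le_iff]
  constructor <;> nlinarith [n1.1, n1.2, n2.1, n2.2]

lemma aux_sum_id (m : ℕ) : ∑ i ∈ range m, ((i:ℝ)+1) = (m:ℝ)*((m:ℝ)+1)/2 := by
  induction m with
  | zero => simp
  | succ k ih => rw [Finset.sum_range_succ, ih]; push_cast; ring

lemma aux_sum_sq (m : ℕ) :
    ∑ i ∈ range m, ((i:ℝ)+1)^2 = (m:ℝ)*((m:ℝ)+1)*(2*(m:ℝ)+1)/6 := by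
  induction m with
  | zero => simp
  | succ k ih => rw [Finset.sum_range_succ, ih]; push_cast; ring

lemma aux_sum_c_sq (m : ℕ) :
    ∑ k : Fin m, (((k:ℕ):ℝ) + 1 - ((m:ℝ)+1)/2)^2 = (m:ℝ)*((m:ℝ)^2-1)/12 := by
  rw [Fin.sum_univ_eq_sum_range (fun i : ℕ => ((i:ℝ) + 1 - ((m:ℝ)+1)/2)^2) m]
  have expand : ∀ i ∈ range m, (((i:ℕ):ℝ) + 1 - ((m:ℝ)+1)/2)^2
      = ((i:ℝ)+1)^2 - ((m:ℝ)+1)*((i:ℝ)+1) + ((m:ℝ)+1)^2/4 := by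
    intro i _; ring
  rw [Finset.sum_congr rfl expand]
  rw [Finset.sum_add_distrib, Finset.sum_sub_distrib, ← Finset.mul_sum,
    aux_sum_id, aux_sum_sq, Finset.sum_const, Finset.card_range]
  push_cast
  ring

lemma aux_sum_exp_symm (m : ℕ) (s : ℝ) :
    ∑ k : Fin m, Real.exp (s * (((k:ℕ):ℝ) + 1 - ((m:ℝ)+1)/2))
      = ∑ k : Fin m, Real.exp (-(s * (((k:ℕ):ℝ) + 1 - ((m:ℝ)+1)/2))) := by
  apply Fintype.sum_equiv Fin.revPerm
  intro k
  have hk : (k:ℕ) < m := k.isLt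
  have : ((Fin.revPerm k : Fin m) : ℕ) = m - ((k:ℕ) + 1) := by
    simp [Fin.revPerm, Fin.val_rev]
  rw [this]
  have hcast : ((m - ((k:ℕ)+1) : ℕ) : ℝ) = (m:ℝ) - ((k:ℕ):ℝ) - 1 := by
    have h : (k:ℕ)+1 ≤ m := hk
    push_cast [Nat.cast_sub h]; ring
  rw [hcast]
  congr 1
  ring

lemma aux_sum_exp_pow (n ℓ : ℕ) (s : ℝ) :
    ∑ yv : Fin n → Fin ℓ, Real.exp (s * ((∑ i, (((yv i : ℕ):ℝ)+1)) - n*((ℓ:ℝ)+1)/2))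
      = (∑ k : Fin ℓ, Real.exp (s * (((k:ℕ):ℝ) + 1 - ((ℓ:ℝ)+1)/2)))^n := by
  classical
  rw [Finset.sum_pow' Finset.univ (fun k : Fin ℓ => Real.exp (s * (((k:ℕ):ℝ) + 1 - ((ℓ:ℝ)+1)/2))) n,
    Fintype.piFinset_univ]
  apply Finset.sum_congr rfl
  intro yv _
  rw [← Real.exp_sum]
  congr 1
  have h : ∑ i : Fin n, ((((yv i : ℕ):ℝ) + 1) - ((ℓ:ℝ)+1)/2)
      = (∑ i, (((yv i : ℕ):ℝ)+1)) - n*((ℓ:ℝ)+1)/2 := by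
    rw [Finset.sum_sub_distrib, Finset.sum_const, Finset.card_univ, Fintype.card_fin,
      nsmul_eq_mul]
    ring
  rw [← h, Finset.mul_sum]

lemma aux_c_abs (ℓ : ℕ) (k : Fin ℓ) (hℓ : 2 ≤ ℓ) :
    |((k:ℕ):ℝ) + 1 - ((ℓ:ℝ)+1)/2| ≤ ((ℓ:ℝ)-1)/2 := by
  have h1 : ((k:ℕ):ℝ) + 1 ≤ (ℓ:ℝ) := by
    have : (k:ℕ) + 1 ≤ ℓ := k.isLt
    exact_mod_cast this
  have h0 : (0:ℝ) ≤ ((k:ℕ):ℝ) := Nat.cast_nonneg _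
  rw [abs_le]; constructor <;> nlinarith

set_option maxHeartbeats 1000000 in
lemma aux_G_lower (ℓ : ℕ) (t r : ℝ) (hℓ : 2 ≤ ℓ) (ht : 0 < t) (htL : t * (ℓ:ℝ) = 45*r)
    (hr : 0 < r) (hr' : r ≤ 1/50) :
    (ℓ:ℝ) * Real.exp (57.5 * r^2)
      ≤ ∑ k : Fin ℓ, Real.exp (t * (((k:ℕ):ℝ) + 1 - ((ℓ:ℝ)+1)/2)) := by
  have hL2 : (2:ℝ) ≤ (ℓ:ℝ) := by exact_mod_cast hℓ
  have hL0 : (0:ℝ) < (ℓ:ℝ) := by linarith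
  -- each |t * c k| ≤ 9/20
  have hvb : ∀ k : Fin ℓ, |t * (((k:ℕ):ℝ) + 1 - ((ℓ:ℝ)+1)/2)| ≤ 9/20 := by
    intro k
    rw [abs_mul, abs_of_pos ht]
    have h1 := aux_c_abs ℓ k hℓ
    have h2 : t * (((ℓ:ℝ)-1)/2) ≤ 9/20 := by nlinarith
    calc t * |((k:ℕ):ℝ) + 1 - ((ℓ:ℝ)+1)/2| ≤ t * (((ℓ:ℝ)-1)/2) := by
          exact mul_le_mul_of_nonneg_left h1 ht.le
      _ ≤ 9/20 := h2
  -- pointwise lower bound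
  have hpt : ∀ k : Fin ℓ,
      2 + (19/20) * (t * (((k:ℕ):ℝ) + 1 - ((ℓ:ℝ)+1)/2))^2
        ≤ Real.exp (t * (((k:ℕ):ℝ) + 1 - ((ℓ:ℝ)+1)/2))
          + Real.exp (-(t * (((k:ℕ):ℝ) + 1 - ((ℓ:ℝ)+1)/2))) := by
    intro k
    set v := t * (((k:ℕ):ℝ) + 1 - ((ℓ:ℝ)+1)/2) with hv
    have hb := aux_cosh_bound v ((hvb k).trans (by norm_num))
    have hb2 := (abs_sub_le_iff.1 hb).2
    have hsq : v^2 ≤ (9/20)^2 := by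
      have := hvb k
      rw [← hv] at this
      nlinarith [abs_nonneg v, sq_abs v]
    nlinarith [sq_nonneg v]
  -- sum it
  have hsum : 2 * ((ℓ:ℝ) + (19/40) * t^2 * ((ℓ:ℝ)*((ℓ:ℝ)^2-1)/12))
      ≤ 2 * ∑ k : Fin ℓ, Real.exp (t * (((k:ℕ):ℝ) + 1 - ((ℓ:ℝ)+1)/2)) := by
    have e1 : 2 * ∑ k : Fin ℓ, Real.exp (t * (((k:ℕ):ℝ) + 1 - ((ℓ:ℝ)+1)/2))
        = ∑ k : Fin ℓ, (Real.exp (t * (((k:ℕ):ℝ) + 1 - ((ℓ:ℝ)+1)/2))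
            + Real.exp (-(t * (((k:ℕ):ℝ) + 1 - ((ℓ:ℝ)+1)/2)))) := by
      rw [Finset.sum_add_distrib, ← aux_sum_exp_symm]; ring
    rw [e1]
    have e2 : ∑ k : Fin ℓ, (2 + (19/20) * (t * (((k:ℕ):ℝ) + 1 - ((ℓ:ℝ)+1)/2))^2)
        = 2 * ((ℓ:ℝ) + (19/40) * t^2 * ((ℓ:ℝ)*((ℓ:ℝ)^2-1)/12)) := by
      rw [Finset.sum_add_distrib, Finset.sum_const, Finset.card_univ, Fintype.card_fin]
      have e3 : ∑ k : Fin ℓ, (19/20) * (t * (((k:ℕ):ℝ) + 1 - ((ℓ:ℝ)+1)/2))^2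
          = (19/20) * t^2 * ∑ k : Fin ℓ, (((k:ℕ):ℝ) + 1 - ((ℓ:ℝ)+1)/2)^2 := by
        rw [Finset.mul_sum]
        apply Finset.sum_congr rfl
        intro k _; ring
      rw [e3, aux_sum_c_sq, nsmul_eq_mul]
      ring
    rw [← e2]
    exact Finset.sum_le_sum (fun k _ => hpt k)
  -- final per-coordinate numeric inequality
  have hnum : (ℓ:ℝ) * Real.exp (57.5 * r^2)
      ≤ (ℓ:ℝ) + (19/40) * t^2 * ((ℓ:ℝ)*((ℓ:ℝ)^2-1)/12) := by
    have hz0 : (0:ℝ) ≤ 57.5 * r^2 := by positivity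
    have hz1 : 57.5 * r^2 ≤ 1 := by nlinarith
    have hexp := Real.exp_bound' hz0 hz1 (n := 2) (by norm_num)
    have hexp' : Real.exp (57.5*r^2) ≤ 1 + 57.5*r^2 + (3/4)*(57.5*r^2)^2 := by
      have : ∑ m ∈ range 2, (57.5*r^2)^m / m.factorial = 1 + 57.5*r^2 := by
        norm_num [Finset.sum_range_succ, Nat.factorial]
      rw [this] at hexp
      norm_num [Nat.factorial] at hexp
      nlinarith [hexp]
    -- t^2*(L^2-1) ≥ (3/4)*2025*r^2
    have ht2 : t * 2 ≤ 45 * r := by nlinarith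
    have hkey : (3/4) * 2025 * r^2 ≤ t^2 * ((ℓ:ℝ)^2 - 1) := by nlinarith [sq_nonneg t, sq_nonneg r]
    have hrsq : r^2 ≤ 1/2500 := by nlinarith
    have hr4 : r^2 * r^2 ≤ r^2 * (1/2500) :=
      mul_le_mul_of_nonneg_left hrsq (sq_nonneg r)
    have e575 : (57.5:ℝ) = 115/2 := by norm_num
    have scalar : 1 + 57.5*r^2 + (3/4)*(57.5*r^2)^2
        ≤ 1 + (19/480) * (t^2 * ((ℓ:ℝ)^2 - 1)) := by
      rw [e575]
      nlinarith [hr4, hkey]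
    calc (ℓ:ℝ) * Real.exp (57.5 * r^2)
        ≤ (ℓ:ℝ) * (1 + (19/480) * (t^2 * ((ℓ:ℝ)^2 - 1))) :=
          mul_le_mul_of_nonneg_left (hexp'.trans scalar) hL0.le
      _ = (ℓ:ℝ) + (19/40) * t^2 * ((ℓ:ℝ)*((ℓ:ℝ)^2-1)/12) := by ring
  calc (ℓ:ℝ) * Real.exp (57.5 * r^2)
      ≤ (ℓ:ℝ) + (19/40) * t^2 * ((ℓ:ℝ)*((ℓ:ℝ)^2-1)/12) := hnum
    _ ≤ ∑ k : Fin ℓ, Real.exp (t * (((k:ℕ):ℝ) + 1 - ((ℓ:ℝ)+1)/2)) := by linarith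

set_option maxHeartbeats 1000000 in
lemma aux_G_upper (ℓ : ℕ) (t r : ℝ) (hℓ : 2 ≤ ℓ) (ht : 0 < t) (htL : t * (ℓ:ℝ) = 45*r)
    (hr : 0 < r) (hr' : r ≤ 1/50) :
    ∑ k : Fin ℓ, Real.exp ((2*t) * (((k:ℕ):ℝ) + 1 - ((ℓ:ℝ)+1)/2))
      ≤ (ℓ:ℝ) * Real.exp (372 * r^2) := by
  have hL2 : (2:ℝ) ≤ (ℓ:ℝ) := by exact_mod_cast hℓ
  have hL0 : (0:ℝ) < (ℓ:ℝ) := by linarith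
  have hvb : ∀ k : Fin ℓ, |(2*t) * (((k:ℕ):ℝ) + 1 - ((ℓ:ℝ)+1)/2)| ≤ 9/10 := by
    intro k
    rw [abs_mul, abs_of_pos (by linarith : (0:ℝ) < 2*t)]
    have h1 := aux_c_abs ℓ k hℓ
    have h2 : (2*t) * (((ℓ:ℝ)-1)/2) ≤ 9/10 := by nlinarith
    calc (2*t) * |((k:ℕ):ℝ) + 1 - ((ℓ:ℝ)+1)/2| ≤ (2*t) * (((ℓ:ℝ)-1)/2) :=
          mul_le_mul_of_nonneg_left h1 (by linarith)
      _ ≤ 9/10 := h2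
  have hpt : ∀ k : Fin ℓ,
      Real.exp ((2*t) * (((k:ℕ):ℝ) + 1 - ((ℓ:ℝ)+1)/2))
          + Real.exp (-((2*t) * (((k:ℕ):ℝ) + 1 - ((ℓ:ℝ)+1)/2)))
        ≤ 2 + (11/10) * ((2*t) * (((k:ℕ):ℝ) + 1 - ((ℓ:ℝ)+1)/2))^2 := by
    intro k
    set v := (2*t) * (((k:ℕ):ℝ) + 1 - ((ℓ:ℝ)+1)/2) with hv
    have hb := aux_cosh_bound v ((hvb k).trans (by norm_num))
    have hb1 := (abs_sub_le_iff.1 hb).1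
    have hsq : v^2 ≤ (9/10)^2 := by
      have := hvb k
      rw [← hv] at this
      nlinarith [abs_nonneg v, sq_abs v]
    nlinarith [sq_nonneg v]
  have hsum : 2 * ∑ k : Fin ℓ, Real.exp ((2*t) * (((k:ℕ):ℝ) + 1 - ((ℓ:ℝ)+1)/2))
      ≤ 2 * ((ℓ:ℝ) + (11/5) * t^2 * ((ℓ:ℝ)*((ℓ:ℝ)^2-1)/12)) := by
    have e1 : 2 * ∑ k : Fin ℓ, Real.exp ((2*t) * (((k:ℕ):ℝ) + 1 - ((ℓ:ℝ)+1)/2))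
        = ∑ k : Fin ℓ, (Real.exp ((2*t) * (((k:ℕ):ℝ) + 1 - ((ℓ:ℝ)+1)/2))
            + Real.exp (-((2*t) * (((k:ℕ):ℝ) + 1 - ((ℓ:ℝ)+1)/2)))) := by
      rw [Finset.sum_add_distrib, ← aux_sum_exp_symm]; ring
    rw [e1]
    have e2 : ∑ k : Fin ℓ, (2 + (11/10) * ((2*t) * (((k:ℕ):ℝ) + 1 - ((ℓ:ℝ)+1)/2))^2)
        = 2 * ((ℓ:ℝ) + (11/5) * t^2 * ((ℓ:ℝ)*((ℓ:ℝ)^2-1)/12)) := by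
      rw [Finset.sum_add_distrib, Finset.sum_const, Finset.card_univ, Fintype.card_fin]
      have e3 : ∑ k : Fin ℓ, (11/10) * ((2*t) * (((k:ℕ):ℝ) + 1 - ((ℓ:ℝ)+1)/2))^2
          = (22/5) * t^2 * ∑ k : Fin ℓ, (((k:ℕ):ℝ) + 1 - ((ℓ:ℝ)+1)/2)^2 := by
        rw [Finset.mul_sum]
        apply Finset.sum_congr rfl
        intro k _; ring
      rw [e3, aux_sum_c_sq, nsmul_eq_mul]
      ring
    rw [← e2]
    exact Finset.sum_le_sum (fun k _ => hpt k)
  have hnum : (ℓ:ℝ) + (11/5) * t^2 * ((ℓ:ℝ)*((ℓ:ℝ)^2-1)/12)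
      ≤ (ℓ:ℝ) * Real.exp (372 * r^2) := by
    have hkey : t^2 * ((ℓ:ℝ)^2 - 1) ≤ 2025 * r^2 := by nlinarith [sq_nonneg t]
    have hlin : (1:ℝ) + 372 * r^2 ≤ Real.exp (372 * r^2) := by
      have := Real.add_one_le_exp (372 * r^2)
      linarith
    have scalar : 1 + (11/60) * (t^2 * ((ℓ:ℝ)^2 - 1)) ≤ 1 + 372 * r^2 := by
      nlinarith [hkey]
    calc (ℓ:ℝ) + (11/5) * t^2 * ((ℓ:ℝ)*((ℓ:ℝ)^2-1)/12)
        = (ℓ:ℝ) * (1 + (11/60) * (t^2 * ((ℓ:ℝ)^2 - 1))) := by ring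
      _ ≤ (ℓ:ℝ) * (1 + 372 * r^2) := mul_le_mul_of_nonneg_left scalar hL0.le
      _ ≤ (ℓ:ℝ) * Real.exp (372 * r^2) := mul_le_mul_of_nonneg_left hlin hL0.le
  linarith

set_option maxHeartbeats 1000000 in
/-- Anticoncentration (right tail lower bound) for sums of i.i.d. uniforms on
{1,…,ℓ}: for 0 < λ ≤ ℓn/50,
P(Σ(Yᵢ − E Yᵢ) ≥ λ) ≥ (e^{12.5λ²/(ℓ²n)} − 1)² e^{−400λ²/(ℓ²n)}. -/
theorem stmt12 (n ℓ : ℕ) (hℓ : 2 ≤ ℓ) (lam : ℝ) (hlam : 0 < lam)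
    (hlam' : lam ≤ ℓ * n / 50) :
    (Real.exp (12.5 * lam ^ 2 / ((ℓ : ℝ) ^ 2 * n)) - 1) ^ 2 *
        Real.exp (-400 * lam ^ 2 / ((ℓ : ℝ) ^ 2 * n)) ≤
      ((Finset.univ.filter (fun y : Fin n → Fin ℓ =>
        lam ≤ (∑ i, (((y i : ℕ) : ℝ) + 1)) - n * ((ℓ : ℝ) + 1) / 2)).card : ℝ)
        / (ℓ : ℝ) ^ n := by
  classical
  have hL2 : (2:ℝ) ≤ (ℓ:ℝ) := by exact_mod_cast hℓ
  have hL0 : (0:ℝ) < (ℓ:ℝ) := by linarith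
  have hn : 0 < n := by
    rcases Nat.eq_zero_or_pos n with h | h
    · subst h; norm_num at hlam'; nlinarith
    · exact h
  have hnR : (0:ℝ) < (n:ℝ) := by exact_mod_cast hn
  set t : ℝ := 45 * lam / ((ℓ:ℝ)^2 * n) with htdef
  have ht0 : 0 < t := by positivity
  set r : ℝ := lam / ((ℓ:ℝ) * n) with hrdef
  have hr0 : 0 < r := by positivity
  have hr50 : r ≤ 1/50 := by
    rw [hrdef, div_le_iff₀ (by positivity)]
    nlinarith
  have htL : t * (ℓ:ℝ) = 45 * r := by
    rw [htdef, hrdef]; field_simp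
  set x : ℝ := lam^2 / ((ℓ:ℝ)^2 * n) with hxdef
  have hx0 : 0 < x := by positivity
  have hxr : x = r^2 * n := by rw [hxdef, hrdef]; field_simp
  have htlam : t * lam = 45 * x := by rw [htdef, hxdef]; field_simp
  have hpow_t := aux_sum_exp_pow n ℓ t
  have hpow_2t := aux_sum_exp_pow n ℓ (2*t)
  have hGlow := aux_G_lower ℓ t r hℓ ht0 htL hr0 hr50
  have hGup := aux_G_upper ℓ t r hℓ ht0 htL hr0 hr50
  have hcard : ((Finset.univ : Finset (Fin n → Fin ℓ)).card : ℝ) = (ℓ:ℝ)^n := by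
    rw [Finset.card_univ, Fintype.card_fun]
    push_cast
    norm_num
  have hGt_pow : ((ℓ:ℝ)^n) * Real.exp (57.5 * x)
      ≤ (∑ k : Fin ℓ, Real.exp (t * (((k:ℕ):ℝ) + 1 - ((ℓ:ℝ)+1)/2)))^n := by
    have h1 : (((ℓ:ℝ)) * Real.exp (57.5 * r^2))^n
        ≤ (∑ k : Fin ℓ, Real.exp (t * (((k:ℕ):ℝ) + 1 - ((ℓ:ℝ)+1)/2)))^n :=
      pow_le_pow_left₀ (by positivity) hGlow n
    have h2 : (((ℓ:ℝ)) * Real.exp (57.5 * r^2))^n = ((ℓ:ℝ)^n) * Real.exp (57.5 * x) := by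
      rw [mul_pow, ← Real.exp_nat_mul]
      congr 1
      rw [hxr]; ring
    rw [← h2]; exact h1
  have hG2t_pow : (∑ k : Fin ℓ, Real.exp ((2*t) * (((k:ℕ):ℝ) + 1 - ((ℓ:ℝ)+1)/2)))^n
      ≤ ((ℓ:ℝ)^n) * Real.exp (372 * x) := by
    have h1 : (∑ k : Fin ℓ, Real.exp ((2*t) * (((k:ℕ):ℝ) + 1 - ((ℓ:ℝ)+1)/2)))^n
        ≤ (((ℓ:ℝ)) * Real.exp (372 * r^2))^n :=
      pow_le_pow_left₀ (Finset.sum_nonneg (fun k _ => (Real.exp_pos _).le)) hGup n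
    have h2 : (((ℓ:ℝ)) * Real.exp (372 * r^2))^n = ((ℓ:ℝ)^n) * Real.exp (372 * x) := by
      rw [mul_pow, ← Real.exp_nat_mul]
      congr 1
      rw [hxr]; ring
    rw [← h2]; exact h1
  set A := Finset.univ.filter (fun y : Fin n → Fin ℓ =>
        lam ≤ (∑ i, (((y i : ℕ) : ℝ) + 1)) - n * ((ℓ : ℝ) + 1) / 2) with hAdef
  have hsplit := Finset.sum_filter_add_sum_filter_not Finset.univ
    (fun y : Fin n → Fin ℓ => lam ≤ (∑ i, (((y i : ℕ) : ℝ) + 1)) - n * ((ℓ : ℝ) + 1) / 2)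
    (fun y => Real.exp (t * ((∑ i, (((y i : ℕ):ℝ)+1)) - n*((ℓ:ℝ)+1)/2)))
  have hnotb : ∑ y ∈ Finset.univ.filter (fun y : Fin n → Fin ℓ =>
        ¬ (lam ≤ (∑ i, (((y i : ℕ) : ℝ) + 1)) - n * ((ℓ : ℝ) + 1) / 2)),
        Real.exp (t * ((∑ i, (((y i : ℕ):ℝ)+1)) - n*((ℓ:ℝ)+1)/2))
      ≤ ((ℓ:ℝ)^n) * Real.exp (45 * x) := by
    calc ∑ y ∈ Finset.univ.filter (fun y : Fin n → Fin ℓ =>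
        ¬ (lam ≤ (∑ i, (((y i : ℕ) : ℝ) + 1)) - n * ((ℓ : ℝ) + 1) / 2)),
        Real.exp (t * ((∑ i, (((y i : ℕ):ℝ)+1)) - n*((ℓ:ℝ)+1)/2))
        ≤ ∑ _y ∈ Finset.univ.filter (fun y : Fin n → Fin ℓ =>
        ¬ (lam ≤ (∑ i, (((y i : ℕ) : ℝ) + 1)) - n * ((ℓ : ℝ) + 1) / 2)),
          Real.exp (45 * x) := by
          apply Finset.sum_le_sum
          intro y hy
          rw [Finset.mem_filter] at hy
          push_neg at hy
          rw [← htlam]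
          exact Real.exp_le_exp.2 (mul_le_mul_of_nonneg_left hy.2.le ht0.le)
      _ ≤ ((ℓ:ℝ)^n) * Real.exp (45 * x) := by
          rw [Finset.sum_const, nsmul_eq_mul]
          apply mul_le_mul_of_nonneg_right _ (Real.exp_pos _).le
          calc ((Finset.univ.filter (fun y : Fin n → Fin ℓ =>
              ¬ (lam ≤ (∑ i, (((y i : ℕ) : ℝ) + 1)) - n * ((ℓ : ℝ) + 1) / 2))).card : ℝ)
              ≤ ((Finset.univ : Finset (Fin n → Fin ℓ)).card : ℝ) := by
                exact_mod_cast Finset.card_filter_le _ _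
            _ = (ℓ:ℝ)^n := hcard
  have hAlow : ((ℓ:ℝ)^n) * (Real.exp (57.5 * x) - Real.exp (45 * x))
      ≤ ∑ y ∈ A, Real.exp (t * ((∑ i, (((y i : ℕ):ℝ)+1)) - n*((ℓ:ℝ)+1)/2)) := by
    rw [hpow_t] at hsplit
    nlinarith [hGt_pow, hnotb, hsplit]
  have hCS := Finset.sum_mul_sq_le_sq_mul_sq A (fun _ => (1:ℝ))
    (fun y => Real.exp (t * ((∑ i, (((y i : ℕ):ℝ)+1)) - n*((ℓ:ℝ)+1)/2)))
  simp only [one_mul, one_pow] at hCS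
  have hsq : ∀ y : Fin n → Fin ℓ,
      (Real.exp (t * ((∑ i, (((y i : ℕ):ℝ)+1)) - n*((ℓ:ℝ)+1)/2)))^2
        = Real.exp ((2*t) * ((∑ i, (((y i : ℕ):ℝ)+1)) - n*((ℓ:ℝ)+1)/2)) := by
    intro y
    rw [sq, ← Real.exp_add]
    congr 1
    ring
  have hCS2 : (∑ y ∈ A, Real.exp (t * ((∑ i, (((y i : ℕ):ℝ)+1)) - n*((ℓ:ℝ)+1)/2)))^2
      ≤ (A.card : ℝ) * (((ℓ:ℝ)^n) * Real.exp (372 * x)) := by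
    have hsum_const : ∑ _y ∈ A, (1:ℝ) = (A.card : ℝ) := by
      rw [Finset.sum_const, nsmul_eq_mul, mul_one]
    have h2 : ∑ y ∈ A, (Real.exp (t * ((∑ i, (((y i : ℕ):ℝ)+1)) - n*((ℓ:ℝ)+1)/2)))^2
        ≤ ((ℓ:ℝ)^n) * Real.exp (372 * x) := by
      calc ∑ y ∈ A, (Real.exp (t * ((∑ i, (((y i : ℕ):ℝ)+1)) - n*((ℓ:ℝ)+1)/2)))^2
          = ∑ y ∈ A, Real.exp ((2*t) * ((∑ i, (((y i : ℕ):ℝ)+1)) - n*((ℓ:ℝ)+1)/2)) :=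
            Finset.sum_congr rfl (fun y _ => hsq y)
        _ ≤ ∑ y : Fin n → Fin ℓ, Real.exp ((2*t) * ((∑ i, (((y i : ℕ):ℝ)+1)) - n*((ℓ:ℝ)+1)/2)) :=
            Finset.sum_le_sum_of_subset_of_nonneg (Finset.filter_subset _ _)
              (fun y _ _ => (Real.exp_pos _).le)
        _ = (∑ k : Fin ℓ, Real.exp ((2*t) * (((k:ℕ):ℝ) + 1 - ((ℓ:ℝ)+1)/2)))^n := hpow_2t
        _ ≤ ((ℓ:ℝ)^n) * Real.exp (372 * x) := hG2t_pow
    calc (∑ y ∈ A, Real.exp (t * ((∑ i, (((y i : ℕ):ℝ)+1)) - n*((ℓ:ℝ)+1)/2)))^2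
        ≤ (∑ _y ∈ A, (1:ℝ)) * ∑ y ∈ A, (Real.exp (t * ((∑ i, (((y i : ℕ):ℝ)+1)) - n*((ℓ:ℝ)+1)/2)))^2 := hCS
      _ ≤ (A.card : ℝ) * (((ℓ:ℝ)^n) * Real.exp (372 * x)) := by
          rw [hsum_const]
          exact mul_le_mul_of_nonneg_left h2 (Nat.cast_nonneg _)
  have hAcard : ((ℓ:ℝ)^n) * (Real.exp (57.5 * x) - Real.exp (45 * x))^2 / Real.exp (372 * x)
      ≤ (A.card : ℝ) := by
    have hLn : (0:ℝ) < (ℓ:ℝ)^n := pow_pos hL0 n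
    have hD0 : (0:ℝ) ≤ Real.exp (57.5 * x) - Real.exp (45 * x) := by
      have h45 : (45:ℝ) * x ≤ 57.5 * x := by nlinarith
      have := Real.exp_le_exp.2 h45
      linarith
    have h1 : (((ℓ:ℝ)^n) * (Real.exp (57.5 * x) - Real.exp (45 * x)))^2
        ≤ (A.card : ℝ) * (((ℓ:ℝ)^n) * Real.exp (372 * x)) :=
      le_trans (pow_le_pow_left₀ (mul_nonneg hLn.le hD0) hAlow 2) hCS2
    rw [div_le_iff₀ (Real.exp_pos _)]
    nlinarith [h1, Real.exp_pos (372*x)]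
  rw [le_div_iff₀ (pow_pos hL0 n)]
  have g1 : 12.5 * lam ^ 2 / ((ℓ : ℝ) ^ 2 * n) = 12.5 * x := by rw [hxdef]; ring
  have g2 : -400 * lam ^ 2 / ((ℓ : ℝ) ^ 2 * n) = -400 * x := by rw [hxdef]; ring
  rw [g1, g2]
  have hfinal : (Real.exp (12.5 * x) - 1) ^ 2 * Real.exp (-400 * x) * (ℓ:ℝ)^n
      ≤ ((ℓ:ℝ)^n) * (Real.exp (57.5 * x) - Real.exp (45 * x))^2 / Real.exp (372 * x) := by
    have hDeq : Real.exp (57.5 * x) - Real.exp (45 * x)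
        = Real.exp (45 * x) * (Real.exp (12.5 * x) - 1) := by
      rw [mul_sub, mul_one, ← Real.exp_add]
      congr 2
      ring
    rw [hDeq]
    have hexpcomp : Real.exp (-400 * x) ≤ Real.exp (45*x)^2 / Real.exp (372 * x) := by
      rw [sq, ← Real.exp_add, ← Real.exp_sub]
      apply Real.exp_le_exp.2
      nlinarith
    calc (Real.exp (12.5 * x) - 1) ^ 2 * Real.exp (-400 * x) * (ℓ:ℝ)^n
        ≤ (Real.exp (12.5 * x) - 1) ^ 2 * (Real.exp (45*x)^2 / Real.exp (372 * x)) * (ℓ:ℝ)^n := by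
          apply mul_le_mul_of_nonneg_right _ (pow_pos hL0 n).le
          exact mul_le_mul_of_nonneg_left hexpcomp (sq_nonneg _)
      _ = ((ℓ:ℝ)^n) * (Real.exp (45 * x) * (Real.exp (12.5 * x) - 1))^2 / Real.exp (372 * x) := by
          ring
  linarith [hfinal, hAcard]
end

section
/- Let ℓ ≥ 2 be an integer, let Y be uniform on {1,...,ℓ}, and set Z = Y − (ℓ+1)/2. Then for all t ∈ (0, 1/ℓ], exp(t²ℓ²/40) ≤ E[exp(tZ)] ≤ exp(t²ℓ²/20). -/
open Finset

lemma pow1 (n : ℕ) : ∑ j ∈ Finset.range n, ((j:ℝ)+1) = (n:ℝ)*((n:ℝ)+1)/2 := by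
  induction n with
  | zero => simp
  | succ n ih => rw [Finset.sum_range_succ, ih]; push_cast; ring

lemma pow1' (n : ℕ) : ∑ j ∈ Finset.range n, (j:ℝ) = (n:ℝ)*((n:ℝ)-1)/2 := by
  induction n with
  | zero => simp
  | succ n ih => rw [Finset.sum_range_succ, ih]; push_cast; ring

lemma pow2 (n : ℕ) : ∑ j ∈ Finset.range n, ((j:ℝ)+1)^2 = (n:ℝ)*((n:ℝ)+1)*(2*(n:ℝ)+1)/6 := by
  induction n with
  | zero => simp
  | succ n ih => rw [Finset.sum_range_succ, ih]; push_cast; ring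

lemma pow3 (n : ℕ) : ∑ j ∈ Finset.range n, ((j:ℝ)+1)^3 = ((n:ℝ)*((n:ℝ)+1)/2)^2 := by
  induction n with
  | zero => simp
  | succ n ih => rw [Finset.sum_range_succ, ih]; push_cast; ring

lemma taylor4 {x : ℝ} (hx : |x| ≤ 1) :
    |Real.exp x - (1 + x + x^2/2 + x^3/6)| ≤ 5/96 * x^4 := by
  have h := Real.exp_bound hx (n := 4) (by norm_num)
  have hs : ∑ m ∈ Finset.range 4, x ^ m / (m.factorial : ℝ) = 1 + x + x^2/2 + x^3/6 := by
    simp [Finset.sum_range_succ, Nat.factorial]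
  rw [hs] at h
  have habs : |x|^4 = x^4 := by rw [← abs_pow, abs_of_nonneg (by positivity)]
  calc |Real.exp x - (1 + x + x^2/2 + x^3/6)| ≤ |x|^4 * ((4:ℕ).succ / ((4:ℕ).factorial * 4)) := h
    _ = 5/96 * x^4 := by rw [habs]; norm_num [Nat.factorial]; ring

set_option maxHeartbeats 2000000 in
/-- MGF bounds for the centered uniform distribution on {1,…,ℓ}: for
t ∈ (0, 1/ℓ], e^{t²ℓ²/40} ≤ E[e^{tZ}] ≤ e^{t²ℓ²/20}, where
E[e^{tZ}] = (1/ℓ)·Σ_{j=1}^{ℓ} e^{t(j − (ℓ+1)/2)}. -/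
theorem stmt14 (ℓ : ℕ) (hℓ : 2 ≤ ℓ) (t : ℝ) (ht : 0 < t) (ht' : t ≤ 1 / ℓ) :
    Real.exp (t ^ 2 * (ℓ : ℝ) ^ 2 / 40) ≤
      (∑ j ∈ Finset.range ℓ,
        Real.exp (t * ((j : ℝ) + 1 - ((ℓ : ℝ) + 1) / 2))) / ℓ ∧
    (∑ j ∈ Finset.range ℓ,
        Real.exp (t * ((j : ℝ) + 1 - ((ℓ : ℝ) + 1) / 2))) / ℓ ≤
      Real.exp (t ^ 2 * (ℓ : ℝ) ^ 2 / 20) := by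
  have hn2 : (2:ℝ) ≤ (ℓ:ℝ) := by exact_mod_cast hℓ
  have hl0 : (0:ℝ) < (ℓ:ℝ) := by linarith
  have htl : t * (ℓ:ℝ) ≤ 1 := (le_div_iff₀ hl0).mp ht'
  have hu1 : t^2 * (ℓ:ℝ)^2 ≤ 1 := by nlinarith [mul_nonneg ht.le hl0.le]
  have hu0 : 0 < t^2 * (ℓ:ℝ)^2 := by positivity
  set P : ℕ → ℝ := fun j => t * ((j : ℝ) + 1 - ((ℓ : ℝ) + 1) / 2) with hPdef
  -- squared terms are small
  have hP2 : ∀ j ∈ Finset.range ℓ, (P j)^2 ≤ t^2 * (ℓ:ℝ)^2 / 4 := by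
    intro j hj
    have hj1 : (j:ℝ) + 1 ≤ (ℓ:ℝ) := by exact_mod_cast Nat.succ_le_of_lt (Finset.mem_range.mp hj)
    have hj0 : (0:ℝ) ≤ (j:ℝ) := Nat.cast_nonneg j
    have ha : ((j:ℝ) + 1 - ((ℓ:ℝ)+1)/2)^2 ≤ (ℓ:ℝ)^2/4 := by nlinarith
    have : (P j)^2 = t^2 * ((j:ℝ) + 1 - ((ℓ:ℝ)+1)/2)^2 := by rw [hPdef]; ring
    rw [this]
    nlinarith [sq_nonneg t]
  have hPle : ∀ j ∈ Finset.range ℓ, |P j| ≤ 1 := by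
    intro j hj
    have h2 := hP2 j hj
    nlinarith [abs_nonneg (P j), sq_abs (P j)]
  -- sum of quartic-corrected lower/upper cubic polynomials
  have key1 : ∑ j ∈ Finset.range ℓ, (1 + P j + (P j)^2/2 + (P j)^3/6)
      = (ℓ:ℝ) + t^2 * ((ℓ:ℝ)*((ℓ:ℝ)^2-1))/24 := by
    have e : ∀ j ∈ Finset.range ℓ, (1 + P j + (P j)^2/2 + (P j)^3/6)
        = (1 - t*(((ℓ:ℝ)+1)/2) + t^2*(((ℓ:ℝ)+1)/2)^2/2 - t^3*(((ℓ:ℝ)+1)/2)^3/6)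
          + (t - t^2*(((ℓ:ℝ)+1)/2) + t^3*(((ℓ:ℝ)+1)/2)^2/2) * ((j:ℝ)+1)
          + (t^2/2 - t^3*(((ℓ:ℝ)+1)/2)/2) * ((j:ℝ)+1)^2
          + (t^3/6) * ((j:ℝ)+1)^3 := by
      intro j _; rw [hPdef]; ring
    rw [Finset.sum_congr rfl e]
    simp only [Finset.sum_add_distrib, ← Finset.mul_sum, Finset.sum_const, Finset.card_range,
      nsmul_eq_mul]
    rw [pow1', pow2, pow3]
    ring
  have key2 : ∑ j ∈ Finset.range ℓ, (P j)^2 = t^2 * ((ℓ:ℝ)*((ℓ:ℝ)^2-1))/12 := by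
    have e : ∀ j ∈ Finset.range ℓ, (P j)^2
        = t^2*(((ℓ:ℝ)+1)/2)^2 + (-2*t^2*(((ℓ:ℝ)+1)/2)) * ((j:ℝ)+1) + t^2 * ((j:ℝ)+1)^2 := by
      intro j _; rw [hPdef]; ring
    rw [Finset.sum_congr rfl e]
    simp only [Finset.sum_add_distrib, ← Finset.mul_sum, Finset.sum_const, Finset.card_range,
      nsmul_eq_mul]
    rw [pow1', pow2]
    ring
  -- termwise bounds
  have hlowterm : ∀ j ∈ Finset.range ℓ,
      (1 + P j + (P j)^2/2 + (P j)^3/6) - 5/384 * (P j)^2 ≤ Real.exp (P j) := by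
    intro j hj
    have h := abs_sub_le_iff.mp (taylor4 (hPle j hj))
    have h4 : (P j)^4 ≤ (P j)^2 / 4 := by
      have := hP2 j hj
      nlinarith [sq_nonneg (P j)]
    nlinarith [sq_nonneg (P j)]
  have hhighterm : ∀ j ∈ Finset.range ℓ,
      Real.exp (P j) ≤ (1 + P j + (P j)^2/2 + (P j)^3/6) + 5/384 * (P j)^2 := by
    intro j hj
    have h := abs_sub_le_iff.mp (taylor4 (hPle j hj))
    have h4 : (P j)^4 ≤ (P j)^2 / 4 := by
      have := hP2 j hj
      nlinarith [sq_nonneg (P j)]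
    nlinarith [sq_nonneg (P j)]
  set S : ℝ := ∑ j ∈ Finset.range ℓ, Real.exp (P j) with hSdef
  have hSlow : (ℓ:ℝ) + (187/384) * (t^2 * ((ℓ:ℝ)*((ℓ:ℝ)^2-1))/12) ≤ S := by
    have h := Finset.sum_le_sum hlowterm
    rw [Finset.sum_sub_distrib, ← Finset.mul_sum, key1, key2] at h
    linarith
  have hShigh : S ≤ (ℓ:ℝ) + (197/384) * (t^2 * ((ℓ:ℝ)*((ℓ:ℝ)^2-1))/12) := by
    have h := Finset.sum_le_sum hhighterm
    rw [Finset.sum_add_distrib, ← Finset.mul_sum, key1, key2] at h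
    linarith
  have hn4 : (4:ℝ) ≤ (ℓ:ℝ)^2 := by nlinarith
  constructor
  · -- lower bound
    rw [le_div_iff₀ hl0]
    have hD : 0 < 1 - t^2*(ℓ:ℝ)^2/40 := by nlinarith
    have hexp40 : Real.exp (t^2*(ℓ:ℝ)^2/40) ≤ 1 / (1 - t^2*(ℓ:ℝ)^2/40) := by
      have h1 := Real.add_one_le_exp (-(t^2*(ℓ:ℝ)^2/40))
      rw [Real.exp_neg] at h1
      rw [le_div_iff₀ hD]
      have h2 := Real.exp_pos (t^2*(ℓ:ℝ)^2/40)
      nlinarith [mul_le_mul_of_nonneg_left h1 h2.le,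
        mul_inv_cancel₀ (ne_of_gt h2)]
    have step : Real.exp (t^2*(ℓ:ℝ)^2/40) * (ℓ:ℝ) ≤ (1 / (1 - t^2*(ℓ:ℝ)^2/40)) * (ℓ:ℝ) :=
      mul_le_mul_of_nonneg_right hexp40 hl0.le
    refine step.trans ?_
    rw [div_mul_eq_mul_div, one_mul, div_le_iff₀ hD]
    nlinarith [mul_pos hu0 hl0, mul_nonneg (mul_nonneg hu0.le hu0.le) hl0.le,
      mul_le_mul_of_nonneg_right hu1 (mul_nonneg hu0.le hl0.le)]
  · -- upper bound
    rw [div_le_iff₀ hl0]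
    have h1 := mul_le_mul_of_nonneg_right (Real.add_one_le_exp (t^2*(ℓ:ℝ)^2/20)) hl0.le
    nlinarith [mul_pos hu0 hl0, mul_le_mul_of_nonneg_right hu1 (mul_nonneg hu0.le hl0.le)]
end

section
/- For all real x in (0,1], exp(x²/25) ≤ (e^{x/2} − e^{−x/2})/x, and for all x > 0, (e^{x/2} − e^{−x/2})/x ≤ exp(x²/20). -/
-- sinh y ≤ y * exp (y^2/5) for y ∈ [0, 2^k], by induction on k
lemma sinh_le_aux : ∀ k : ℕ, ∀ y : ℝ, 0 ≤ y → y ≤ 2 ^ k →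
    Real.sinh y ≤ y * Real.exp (y ^ 2 / 5) := by
  intro k
  induction k with
  | zero =>
    intro y hy0 hy1
    simp only [pow_zero] at hy1
    rw [Real.sinh_eq]
    have hE1 : Real.exp y ≤ 1 + y + y ^ 2 / 2 + y ^ 3 / 6 + y ^ 4 / 24 + y ^ 5 / 100 := by
      have h := Real.exp_bound (x := y) (by rw [abs_of_nonneg hy0]; exact hy1) (n := 5) (by norm_num)
      rw [abs_of_nonneg hy0] at h
      have h' := (abs_le.mp h).2
      simp [Finset.sum_range_succ, Nat.factorial] at h'
      norm_num at h'
      nlinarith [h']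
    have hE2 : 1 - y + y ^ 2 / 2 - y ^ 3 / 6 + y ^ 4 / 24 - y ^ 5 / 100 ≤ Real.exp (-y) := by
      have h := Real.exp_bound (x := -y) (by rw [abs_neg, abs_of_nonneg hy0]; exact hy1)
        (n := 5) (by norm_num)
      rw [abs_neg, abs_of_nonneg hy0] at h
      have h' := (abs_le.mp h).1
      simp [Finset.sum_range_succ, Nat.factorial] at h'
      norm_num at h'
      nlinarith [h']
    have hR : 1 + y ^ 2 / 5 ≤ Real.exp (y ^ 2 / 5) := by
      have := Real.add_one_le_exp (y ^ 2 / 5); linarith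
    have : (Real.exp y - Real.exp (-y)) / 2 ≤ y + y ^ 3 / 6 + y ^ 5 / 100 := by linarith
    refine this.trans ?_
    calc y + y ^ 3 / 6 + y ^ 5 / 100 ≤ y * (1 + y ^ 2 / 5) := by
          have h53 : y ^ 5 ≤ y ^ 3 := pow_le_pow_of_le_one hy0 hy1 (by norm_num)
          nlinarith [h53]
      _ ≤ y * Real.exp (y ^ 2 / 5) := by
          exact mul_le_mul_of_nonneg_left hR hy0
  | succ k ih =>
    intro y hy0 hy1
    have hz0 : (0:ℝ) ≤ y / 2 := by linarith
    have hz1 : y / 2 ≤ 2 ^ k := by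
      rw [pow_succ] at hy1; linarith
    have h1 := ih (y / 2) hz0 hz1
    have h2 := Real.cosh_le_exp_half_sq (y / 2)
    have h3 : Real.sinh y = 2 * Real.sinh (y / 2) * Real.cosh (y / 2) := by
      rw [← Real.sinh_two_mul]; ring_nf
    have hc0 : (0:ℝ) < Real.cosh (y / 2) := Real.cosh_pos _
    have hs0 : 0 ≤ Real.sinh (y / 2) := Real.sinh_nonneg_iff.mpr hz0
    calc Real.sinh y = 2 * Real.sinh (y / 2) * Real.cosh (y / 2) := h3
      _ ≤ 2 * (y / 2 * Real.exp ((y / 2) ^ 2 / 5)) * Real.exp ((y / 2) ^ 2 / 2) := by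
          apply mul_le_mul (by nlinarith) h2 hc0.le (by positivity)
      _ = y * Real.exp ((y / 2) ^ 2 / 5 + (y / 2) ^ 2 / 2) := by
          rw [Real.exp_add]; ring
      _ ≤ y * Real.exp (y ^ 2 / 5) := by
          apply mul_le_mul_of_nonneg_left (Real.exp_le_exp.mpr (by nlinarith)) hy0

lemma sinh_le (y : ℝ) (hy : 0 ≤ y) : Real.sinh y ≤ y * Real.exp (y ^ 2 / 5) := by
  obtain ⟨k, hk⟩ := pow_unbounded_of_one_lt y (by norm_num : (1:ℝ) < 2)
  exact sinh_le_aux k y hy hk.le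

/-- For x ∈ (0,1], e^{x²/25} ≤ (e^{x/2} − e^{−x/2})/x, and for all x > 0,
(e^{x/2} − e^{−x/2})/x ≤ e^{x²/20}. -/
theorem stmt15 :
    (∀ x : ℝ, 0 < x → x ≤ 1 →
      Real.exp (x ^ 2 / 25) ≤ (Real.exp (x / 2) - Real.exp (-x / 2)) / x) ∧
    (∀ x : ℝ, 0 < x →
      (Real.exp (x / 2) - Real.exp (-x / 2)) / x ≤ Real.exp (x ^ 2 / 20)) := by
  constructor
  · intro x hx0 hx1
    rw [le_div_iff₀ hx0]
    have hE1 : 1 + x/2 + x^2/8 + x^3/48 + x^4/384 ≤ Real.exp (x / 2) := by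
      have h := Real.sum_le_exp_of_nonneg (x := x / 2) (by linarith) 5
      simp [Finset.sum_range_succ, Nat.factorial] at h
      norm_num at h
      nlinarith [h]
    have hE2 : Real.exp (-x / 2) ≤ 1 - x/2 + x^2/8 - x^3/48 + x^4/384 + x^5/3200 := by
      have h := Real.exp_bound (x := -x / 2)
        (by rw [abs_of_nonpos (by linarith)]; linarith) (n := 5) (by norm_num)
      rw [abs_of_nonpos (by linarith : -x/2 ≤ 0)] at h
      have h' := (abs_le.mp h).2
      simp [Finset.sum_range_succ, Nat.factorial] at h'
      norm_num at h'
      nlinarith [h']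
    have hs : x ^ 2 / 25 ≤ 1 := by nlinarith
    have hE3 : Real.exp (x ^ 2 / 25) ≤ 1 + x^2/25 + (x^2/25)^2/2 + (x^2/25)^3 * 4 / (6 * 3) := by
      have h := Real.exp_bound' (x := x ^ 2 / 25) (by positivity) hs (n := 3) (by norm_num)
      simp [Finset.sum_range_succ, Nat.factorial] at h
      norm_num at h
      nlinarith [h]
    have key : (1 + x^2/25 + (x^2/25)^2/2 + (x^2/25)^3 * 4 / (6 * 3)) * x
        ≤ x + x^3/24 - x^5/3200 := by nlinarith [sq_nonneg x, pow_pos hx0 3, pow_pos hx0 5]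
    calc Real.exp (x ^ 2 / 25) * x
        ≤ (1 + x^2/25 + (x^2/25)^2/2 + (x^2/25)^3 * 4 / (6 * 3)) * x :=
          mul_le_mul_of_nonneg_right hE3 hx0.le
      _ ≤ x + x^3/24 - x^5/3200 := key
      _ ≤ Real.exp (x / 2) - Real.exp (-x / 2) := by linarith
  · intro x hx0
    have h := sinh_le (x / 2) (by linarith)
    rw [Real.sinh_eq] at h
    have hxx : (-x) / 2 = -(x / 2) := by ring
    rw [div_le_iff₀ hx0, hxx]
    have : (x / 2) ^ 2 / 5 = x ^ 2 / 20 := by ring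
    rw [this] at h
    nlinarith [h]
end
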